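/- arXiv:2209.13688 — 6 statements merged into one kernel-verified Lean document; each statement's English description precedes it below -/
import Mathlib

section
/- Consider the principal-agent model with a risk-neutral agent under limited liability. A utility profile (x,y) ∈ F is implementable if and only if x ≥ max{0, w_1} and y ≥ 0, where w_1 = r_1 − c_1. -/
open Finset

/-- Expected transfer at action `a` (zero for the default action `0`). -/
noncomputable def expT {n k : ℕ} (I : Fin (n + 1) → Fin k → ℝ) (t : Fin k → ℝ)
    (a : Fin (n + 1)) : ℝ :=
  if a = 0 then 0 else ∑ j, I a j * t j

/-- Risk-neutral agent's utility at action `a`. -/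
noncomputable def uA {n k : ℕ} (c : Fin (n + 1) → ℝ) (I : Fin (n + 1) → Fin k → ℝ)
    (t : Fin k → ℝ) (a : Fin (n + 1)) : ℝ :=
  expT I t a - c a

/-- Principal's utility at action `a`. -/
noncomputable def uP {n k : ℕ} (r : Fin (n + 1) → ℝ) (I : Fin (n + 1) → Fin k → ℝ)
    (t : Fin k → ℝ) (a : Fin (n + 1)) : ℝ :=
  r a - expT I t a

/-- `I` is an information structure: each non-default row is a distribution over signals. -/
def Stochastic {n k : ℕ} (I : Fin (n + 1) → Fin k → ℝ) : Prop :=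
  ∀ a : Fin (n + 1), a ≠ 0 → (∀ j, 0 ≤ I a j) ∧ ∑ j, I a j = 1

/-- `a` is an equilibrium action for the contract `t`: it maximizes the agent's utility
and, among the agent's optimal actions, maximizes the principal's utility
(ties are broken in the principal's favor). -/
def IsEquilibrium {n k : ℕ} (r c : Fin (n + 1) → ℝ) (I : Fin (n + 1) → Fin k → ℝ)
    (t : Fin k → ℝ) (a : Fin (n + 1)) : Prop :=
  (∀ b, uA c I t b ≤ uA c I t a) ∧
    ∀ b, uA c I t b = uA c I t a → uP r I t b ≤ uP r I t a

/-- `t` is an optimal limited-liability contract for `I`, with equilibrium action `a`: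
its equilibrium principal's utility is at least that of any other limited-liability
contract. -/
def OptimalAt {n k : ℕ} (r c : Fin (n + 1) → ℝ) (I : Fin (n + 1) → Fin k → ℝ)
    (t : Fin k → ℝ) (a : Fin (n + 1)) : Prop :=
  (∀ j, 0 ≤ t j) ∧ IsEquilibrium r c I t a ∧
    ∀ (t' : Fin k → ℝ) (a' : Fin (n + 1)), (∀ j, 0 ≤ t' j) →
      IsEquilibrium r c I t' a' → uP r I t' a' ≤ uP r I t a

/-- The utility profile `(x, y)` is implementable by some information structure
together with an optimal contract for it. -/
def ImplementsProfile {n : ℕ} (r c : Fin (n + 1) → ℝ) (x y : ℝ) : Prop :=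
  ∃ (k : ℕ) (_ : 0 < k) (I : Fin (n + 1) → Fin k → ℝ) (t : Fin k → ℝ) (a : Fin (n + 1)),
    Stochastic I ∧ OptimalAt r c I t a ∧ uP r I t a = x ∧ uA c I t a = y

/-- The action `a` is implementable. -/
def ImplementsAction {n : ℕ} (r c : Fin (n + 1) → ℝ) (a : Fin (n + 1)) : Prop :=
  ∃ (k : ℕ) (_ : 0 < k) (I : Fin (n + 1) → Fin k → ℝ) (t : Fin k → ℝ),
    Stochastic I ∧ OptimalAt r c I t a

/-- The action-transfer pair `(a, s)` is implementable. -/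
def ImplementsPair {n : ℕ} (r c : Fin (n + 1) → ℝ) (a : Fin (n + 1)) (s : ℝ) : Prop :=
  ∃ (k : ℕ) (_ : 0 < k) (I : Fin (n + 1) → Fin k → ℝ) (t : Fin k → ℝ),
    Stochastic I ∧ OptimalAt r c I t a ∧ expT I t a = s

/-
Necessity: the agent can always secure 0 by not working, and the principal can always secure
0 with the zero contract and `w₁` with the flat wage `c₁`, whatever the information structure.
Sufficiency for `(rᵢ - s, s - cᵢ)`: let action `i` emit signal `0` surely and every other
action emit signal `1` with probability `q = (cᵢ - c₁)/s`, and pay `s` on signal `0`.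
Any contract implementing `i` must then pay at least `s` on signal `0`, while any contract
implementing another action cannot separate it from action `1`, so it earns at most `w₁`.
-/

section

variable {n k : ℕ} {r c : Fin (n + 1) → ℝ} {I : Fin (n + 1) → Fin k → ℝ} {t : Fin k → ℝ}
  {a : Fin (n + 1)}

@[simp]
theorem expT_zero : expT I t 0 = 0 := if_pos rfl

theorem expT_of_ne_zero (ha : a ≠ 0) : expT I t a = ∑ j, I a j * t j := if_neg ha

@[simp]
theorem expT_zero_contract : expT I 0 a = 0 := by
  unfold expT
  split_ifs <;> simp

theorem expT_const (hI : Stochastic I) (ha : a ≠ 0) (τ : ℝ) : expT I (fun _ => τ) a = τ := by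
  rw [expT_of_ne_zero ha, ← sum_mul, (hI a ha).2, one_mul]

theorem uA_zero (hc0 : c 0 = 0) : uA c I t 0 = 0 := by
  simp [uA, hc0]

theorem uP_zero (hr0 : r 0 = 0) : uP r I t 0 = 0 := by
  simp [uP, hr0]

theorem exists_isEquilibrium (r c : Fin (n + 1) → ℝ) (I : Fin (n + 1) → Fin k → ℝ)
    (t : Fin k → ℝ) : ∃ a, IsEquilibrium r c I t a := by
  obtain ⟨a₀, -, ha₀⟩ := exists_max_image univ (uA c I t) univ_nonempty
  obtain ⟨a, ha, hmax⟩ := (univ.filter fun b => uA c I t b = uA c I t a₀).exists_max_image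
    (uP r I t) ⟨a₀, by simp⟩
  rw [mem_filter] at ha
  refine ⟨a, fun b => ha.2 ▸ ha₀ b (mem_univ b), fun b hb => hmax b ?_⟩
  simp [hb, ha.2]

theorem isEquilibrium_zero_contract (hc0 : c 0 = 0)
    (hc_pos : ∀ a : Fin (n + 1), a ≠ 0 → 0 < c a) : IsEquilibrium r c I 0 0 := by
  have huA : ∀ b, uA c I 0 b = -c b := fun b => by simp [uA]
  refine ⟨fun b => ?_, fun b hb => ?_⟩
  · rcases eq_or_ne b 0 with rfl | hb
    · exact le_rfl
    · simp only [huA, hc0]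
      linarith [hc_pos b hb]
  · obtain rfl : b = 0 := by
      by_contra hb0
      simp only [huA, hc0] at hb
      linarith [hc_pos b hb0]
    exact le_rfl

namespace IsEquilibrium

theorem uA_nonneg (h : IsEquilibrium r c I t a) (hc0 : c 0 = 0) : 0 ≤ uA c I t a :=
  uA_zero hc0 ▸ h.1 0

theorem uP_le_welfare (h : IsEquilibrium r c I t a) (hc0 : c 0 = 0) :
    uP r I t a ≤ r a - c a := by
  have := h.uA_nonneg hc0
  unfold uA at this
  unfold uP
  linarith

theorem cost_le_of_expT_eq (h : IsEquilibrium r c I t a) {b : Fin (n + 1)}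
    (he : expT I t a = expT I t b) : c a ≤ c b := by
  have := h.1 b
  unfold uA at this
  linarith

end IsEquilibrium

namespace OptimalAt

theorem uP_nonneg (h : OptimalAt r c I t a) (hr0 : r 0 = 0) (hc0 : c 0 = 0)
    (hc_pos : ∀ a : Fin (n + 1), a ≠ 0 → 0 < c a) : 0 ≤ uP r I t a :=
  uP_zero (I := I) (t := 0) hr0 ▸
    h.2.2 0 0 (fun _ => le_rfl) (isEquilibrium_zero_contract hc0 hc_pos)

/-- The flat wage `c₁` makes the agent indifferent between not working and action `1`, so the
tie-break in the principal's favour secures her at least `w₁`. -/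
theorem welfare_one_le_uP (h : OptimalAt r c I t a) (hI : Stochastic I)
    (h1 : (1 : Fin (n + 1)) ≠ 0) (hc0 : c 0 = 0) (hc1 : 0 ≤ c 1)
    (hc1_min : ∀ a : Fin (n + 1), a ≠ 0 → c 1 ≤ c a) : r 1 - c 1 ≤ uP r I t a := by
  set w : Fin k → ℝ := fun _ => c 1
  have huA_nonpos : ∀ b, uA c I w b ≤ 0 := fun b => by
    rcases eq_or_ne b 0 with rfl | hb
    · exact (uA_zero hc0).le
    · simp only [uA, w, expT_const hI hb]
      linarith [hc1_min b hb]
  have huA_one : uA c I w 1 = 0 := by simp [uA, w, expT_const hI h1]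
  obtain ⟨b, hb⟩ := exists_isEquilibrium r c I w
  have htie : uA c I w 1 = uA c I w b := le_antisymm (hb.1 1) (huA_one ▸ huA_nonpos b)
  calc r 1 - c 1 = uP r I w 1 := by simp [uP, w, expT_const hI h1]
    _ ≤ uP r I w b := hb.2 1 htie
    _ ≤ uP r I t a := h.2.2 w b (fun _ => hc1) hb

end OptimalAt

theorem ImplementsPair.implementsProfile {s : ℝ} (h : ImplementsPair r c a s) :
    ImplementsProfile r c (r a - s) (s - c a) := by
  obtain ⟨k, hk, I, t, hI, hopt, hs⟩ := h
  exact ⟨k, hk, I, t, a, hI, hopt, by rw [uP, hs], by rw [uA, hs]⟩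

end

section Sufficiency

variable {n : ℕ} {r c : Fin (n + 1) → ℝ} {i : Fin (n + 1)} {q s : ℝ}

def detectionInfo (i : Fin (n + 1)) (q : ℝ) : Fin (n + 1) → Fin 2 → ℝ :=
  fun a => if a = i then ![1, 0] else ![1 - q, q]

theorem stochastic_detectionInfo (hq0 : 0 ≤ q) (hq1 : q ≤ 1) :
    Stochastic (detectionInfo i q) := by
  intro a _
  unfold detectionInfo
  split_ifs
  · exact ⟨fun j => by fin_cases j <;> simp, by simp [Fin.sum_univ_two]⟩
  · exact ⟨fun j => by fin_cases j <;> simp [hq0, hq1], by simp [Fin.sum_univ_two]⟩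

theorem expT_detectionInfo {a : Fin (n + 1)} (ha : a ≠ 0) (t : Fin 2 → ℝ) :
    expT (detectionInfo i q) t a = if a = i then t 0 else (1 - q) * t 0 + q * t 1 := by
  rw [expT_of_ne_zero ha, Fin.sum_univ_two, detectionInfo]
  split_ifs <;> simp

/-- With `q = (cᵢ - c₁)/s`, the bonus `s` pays every working action other than `i` exactly
`s - (cᵢ - c₁)` in expectation, so none of them gives the agent more than `s - cᵢ`. -/
theorem isEquilibrium_detectionInfo (hr0 : r 0 = 0) (hc0 : c 0 = 0)
    (hc1_min : ∀ a : Fin (n + 1), a ≠ 0 → c 1 ≤ c a)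
    (hr1_max : ∀ a : Fin (n + 1), a ≠ 0 → c a = c 1 → r a ≤ r 1) (hi : i ≠ 0) (hs : 0 < s)
    (hx : max 0 (r 1 - c 1) ≤ r i - s) (hy : 0 ≤ s - c i) :
    IsEquilibrium r c (detectionInfo i ((c i - c 1) / s)) ![s, 0] i := by
  have hexp : ∀ b, b ≠ 0 → b ≠ i →
      expT (detectionInfo i ((c i - c 1) / s)) ![s, 0] b = s - (c i - c 1) := fun b hb hbi => by
    rw [expT_detectionInfo hb, if_neg hbi]
    simp only [Matrix.cons_val_zero, Matrix.cons_val_one, mul_zero, add_zero]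
    field_simp
  have huA : uA c (detectionInfo i ((c i - c 1) / s)) ![s, 0] i = s - c i := by
    simp [uA, expT_detectionInfo hi]
  have huP : uP r (detectionInfo i ((c i - c 1) / s)) ![s, 0] i = r i - s := by
    simp [uP, expT_detectionInfo hi]
  rw [max_le_iff] at hx
  refine ⟨fun b => ?_, fun b hb => ?_⟩ <;> rcases eq_or_ne b 0 with rfl | hb0
  · rwa [uA_zero hc0, huA]
  · rcases eq_or_ne b i with rfl | hbi
    · exact le_rfl
    · rw [huA, uA, hexp b hb0 hbi]
      linarith [hc1_min b hb0]
  · rw [uP_zero hr0, huP]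
    exact hx.1
  · rcases eq_or_ne b i with rfl | hbi
    · exact le_rfl
    · rw [huA, uA, hexp b hb0 hbi] at hb
      rw [huP, uP, hexp b hb0 hbi]
      linarith [hr1_max b hb0 (by linarith)]

theorem IsEquilibrium.uP_detectionInfo_le (hr0 : r 0 = 0) (hc0 : c 0 = 0)
    (hc1_min : ∀ a : Fin (n + 1), a ≠ 0 → c 1 ≤ c a)
    (hr1_max : ∀ a : Fin (n + 1), a ≠ 0 → c a = c 1 → r a ≤ r 1) (h1 : (1 : Fin (n + 1)) ≠ 0)
    (hs : 0 < s) (hx : max 0 (r 1 - c 1) ≤ r i - s) {t : Fin 2 → ℝ} (ht : ∀ j, 0 ≤ t j)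
    {a : Fin (n + 1)} (h : IsEquilibrium r c (detectionInfo i ((c i - c 1) / s)) t a) :
    uP r (detectionInfo i ((c i - c 1) / s)) t a ≤ r i - s := by
  rw [max_le_iff] at hx
  rcases eq_or_ne a 0 with rfl | ha0
  · rw [uP_zero hr0]
    exact hx.1
  by_cases hca : c a = c 1
  · linarith [h.uP_le_welfare hc0, hr1_max a ha0 hca]
  have hlt : c 1 < c a := lt_of_le_of_ne (hc1_min a ha0) (Ne.symm hca)
  obtain rfl : a = i := by
    by_contra hai
    refine hlt.not_ge (h.cost_le_of_expT_eq ?_)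
    rw [expT_detectionInfo ha0, expT_detectionInfo h1, if_neg hai]
    split_ifs with h1i
    · simp [h1i]
    · rfl
  have hq : 0 < (c a - c 1) / s := div_pos (by linarith) hs
  have h1a : (1 : Fin (n + 1)) ≠ a := fun h1a => hca (by rw [h1a])
  have hincentive := h.1 1
  rw [uA, uA, expT_detectionInfo ha0, expT_detectionInfo h1, if_pos rfl, if_neg h1a] at hincentive
  have hpay : (c a - c 1) / s * s ≤ (c a - c 1) / s * t 0 := by
    rw [div_mul_cancel₀ _ hs.ne']
    nlinarith [mul_nonneg hq.le (ht 1)]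
  have := le_of_mul_le_mul_left hpay hq
  rw [uP, expT_detectionInfo ha0, if_pos rfl]
  linarith

theorem implementsPair_of_le (hr0 : r 0 = 0) (hc0 : c 0 = 0)
    (hc_pos : ∀ a : Fin (n + 1), a ≠ 0 → 0 < c a)
    (hc1_min : ∀ a : Fin (n + 1), a ≠ 0 → c 1 ≤ c a)
    (hr1_max : ∀ a : Fin (n + 1), a ≠ 0 → c a = c 1 → r a ≤ r 1) (h1 : (1 : Fin (n + 1)) ≠ 0)
    (hi : i ≠ 0) (hx : max 0 (r 1 - c 1) ≤ r i - s) (hy : 0 ≤ s - c i) :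
    ImplementsPair r c i s := by
  have hci := hc_pos i hi
  have hs : 0 < s := by linarith
  have hq0 : 0 ≤ (c i - c 1) / s := div_nonneg (by linarith [hc1_min i hi]) hs.le
  have hq1 : (c i - c 1) / s ≤ 1 := (div_le_one hs).2 (by linarith [hc_pos 1 h1])
  refine ⟨2, two_pos, _, ![s, 0], stochastic_detectionInfo hq0 hq1,
    ⟨fun j => ?_, isEquilibrium_detectionInfo hr0 hc0 hc1_min hr1_max hi hs hx hy,
      fun t a ht h => ?_⟩, by simp [expT_detectionInfo hi]⟩
  · fin_cases j <;> simp [hs.le]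
  · have hP : uP r (detectionInfo i ((c i - c 1) / s)) ![s, 0] i = r i - s := by
      simp [uP, expT_detectionInfo hi]
    exact hP ▸ h.uP_detectionInfo_le hr0 hc0 hc1_min hr1_max h1 hs hx ht

theorem implementsPair_zero_zero (hr0 : r 0 = 0) (hc0 : c 0 = 0)
    (hc_pos : ∀ a : Fin (n + 1), a ≠ 0 → 0 < c a)
    (hc1_min : ∀ a : Fin (n + 1), a ≠ 0 → c 1 ≤ c a)
    (hr1_max : ∀ a : Fin (n + 1), a ≠ 0 → c a = c 1 → r a ≤ r 1) (h1 : (1 : Fin (n + 1)) ≠ 0)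
    (hw : r 1 - c 1 ≤ 0) : ImplementsPair r c 0 0 := by
  refine ⟨1, one_pos, fun _ _ => 1, 0, fun _ _ => ⟨fun _ => zero_le_one, by simp⟩,
    ⟨fun _ => le_rfl, isEquilibrium_zero_contract hc0 hc_pos, fun t a _ h => ?_⟩, expT_zero⟩
  rw [uP_zero hr0]
  rcases eq_or_ne a 0 with rfl | ha0
  · rw [uP_zero hr0]
  have hca : c a = c 1 := le_antisymm
    (h.cost_le_of_expT_eq (by simp [expT_of_ne_zero ha0, expT_of_ne_zero h1])) (hc1_min a ha0)
  linarith [h.uP_le_welfare hc0, hr1_max a ha0 hca]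

end Sufficiency

theorem implementable_profile_iff_risk_neutral_general
    (n : ℕ) (hn : 1 ≤ n) (r c : Fin (n + 1) → ℝ)
    (hr0 : r 0 = 0) (hc0 : c 0 = 0)
    (hc_pos : ∀ a : Fin (n + 1), a ≠ 0 → 0 < c a)
    (hc1_min : ∀ a : Fin (n + 1), a ≠ 0 → c 1 ≤ c a)
    (hr1_max : ∀ a : Fin (n + 1), a ≠ 0 → c a = c 1 → r a ≤ r 1)
    (x y : ℝ)
    (hF : (∃ i : Fin (n + 1), i ≠ 0 ∧ ∃ s : ℝ, 0 ≤ s ∧ x = r i - s ∧ y = s - c i) ∨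
      (x = 0 ∧ y = 0)) :
    ImplementsProfile r c x y ↔ max 0 (r 1 - c 1) ≤ x ∧ 0 ≤ y := by
  have h1 : (1 : Fin (n + 1)) ≠ 0 := by
    rw [Ne, Fin.one_eq_zero_iff]
    omega
  constructor
  · rintro ⟨k, -, I, t, a, hI, hopt, rfl, rfl⟩
    exact ⟨max_le (hopt.uP_nonneg hr0 hc0 hc_pos)
      (hopt.welfare_one_le_uP hI h1 hc0 (hc_pos 1 h1).le hc1_min), hopt.2.1.uA_nonneg hc0⟩
  · rintro ⟨hx, hy⟩
    rcases hF with ⟨i, hi, s, -, rfl, rfl⟩ | ⟨rfl, rfl⟩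
    · exact (implementsPair_of_le hr0 hc0 hc_pos hc1_min hr1_max h1 hi hx hy).implementsProfile
    · simpa [hr0, hc0] using (implementsPair_zero_zero hr0 hc0 hc_pos hc1_min hr1_max h1
        (le_of_max_le_right hx)).implementsProfile

/-- In the principal-agent model with a risk-neutral agent under limited
liability, a utility profile $(x,y) \in F$ is implementable if and only if
$x \ge \max\{0, w_1\}$ and $y \ge 0$, where $w_1 = r_1 - c_1$. -/
theorem implementable_profile_iff_risk_neutral
    (n : ℕ) (hn : 1 ≤ n) (r c : Fin (n + 1) → ℝ)
    (hr0 : r 0 = 0) (hc0 : c 0 = 0)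
    (hr_nonneg : ∀ a, 0 ≤ r a)
    (hc_pos : ∀ a : Fin (n + 1), a ≠ 0 → 0 < c a)
    (hc1_min : ∀ a : Fin (n + 1), a ≠ 0 → c 1 ≤ c a)
    (hr1_max : ∀ a : Fin (n + 1), a ≠ 0 → c a = c 1 → r a ≤ r 1)
    (x y : ℝ)
    (hF : (∃ i : Fin (n + 1), i ≠ 0 ∧ ∃ s : ℝ, 0 ≤ s ∧ x = r i - s ∧ y = s - c i) ∨
      (x = 0 ∧ y = 0)) :
    ImplementsProfile r c x y ↔ max 0 (r 1 - c 1) ≤ x ∧ 0 ≤ y :=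
  implementable_profile_iff_risk_neutral_general n hn r c hr0 hc0 hc_pos hc1_min hr1_max x y hF
end

section
/- Consider the principal-agent model with a risk-neutral agent under limited liability. An action a ∈ {1,...,n} is implementable (for some expected transfer) if and only if w_a ≥ max{w_1, 0}, where w_a = r_a − c_a. -/
open Finset

/-- Expected transfer of a constant contract. -/
lemma expT_const' {n k : ℕ} {I : Fin (n + 1) → Fin k → ℝ} (hI : Stochastic I)
    (s : ℝ) (b : Fin (n + 1)) : expT I (fun _ => s) b = if b = 0 then 0 else s := by
  by_cases hb : b = 0
  · simp [expT, hb]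
  · rw [expT, if_neg hb, if_neg hb, ← Finset.sum_mul, (hI b hb).2, one_mul]

/-- Expected transfer of the zero contract. -/
lemma expT_zero_contract' {n k : ℕ} (I : Fin (n + 1) → Fin k → ℝ) (b : Fin (n + 1)) :
    expT I (fun _ => (0:ℝ)) b = 0 := by
  by_cases hb : b = 0
  · simp [expT, hb]
  · rw [expT, if_neg hb]; simp

/-- Under any information structure, the constant contract `c 1` has equilibrium
action `1`, provided `w₁ ≥ 0`. -/
lemma equilibrium_one' {n k : ℕ} (r c : Fin (n + 1) → ℝ) (h10 : (1 : Fin (n + 1)) ≠ 0)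
    (hr0 : r 0 = 0) (hc0 : c 0 = 0)
    (hc1_min : ∀ a : Fin (n + 1), a ≠ 0 → c 1 ≤ c a)
    (hr1_max : ∀ a : Fin (n + 1), a ≠ 0 → c a = c 1 → r a ≤ r 1)
    (hw1 : 0 ≤ r 1 - c 1)
    {I : Fin (n + 1) → Fin k → ℝ} (hI : Stochastic I) :
    IsEquilibrium r c I (fun _ => c 1) 1 := by
  constructor
  · intro b
    simp only [uA, expT_const' hI, if_neg h10]
    by_cases hb : b = 0
    · subst hb; simp [hc0]
    · rw [if_neg hb]; linarith [hc1_min b hb]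
  · intro b hb
    simp only [uA, expT_const' hI, if_neg h10] at hb
    simp only [uP, expT_const' hI, if_neg h10]
    by_cases hb0 : b = 0
    · subst hb0; rw [if_pos rfl, hr0]; linarith
    · rw [if_neg hb0] at hb ⊢
      have hcb : c b = c 1 := by linarith
      linarith [hr1_max b hb0 hcb]

/-- Any constant contract yields the principal at most `max (w₁) 0` in equilibrium. -/
lemma const_uP_bound' {n k : ℕ} (r c : Fin (n + 1) → ℝ) (h10 : (1 : Fin (n + 1)) ≠ 0)
    (hr0 : r 0 = 0) (hc0 : c 0 = 0)
    (hc1_min : ∀ a : Fin (n + 1), a ≠ 0 → c 1 ≤ c a)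
    (hr1_max : ∀ a : Fin (n + 1), a ≠ 0 → c a = c 1 → r a ≤ r 1)
    {I : Fin (n + 1) → Fin k → ℝ} (hI : Stochastic I) (s : ℝ) (a' : Fin (n + 1))
    (heq : IsEquilibrium r c I (fun _ => s) a') :
    uP r I (fun _ => s) a' ≤ max (r 1 - c 1) 0 := by
  by_cases ha0 : a' = 0
  · subst ha0
    simp only [uP, expT_const' hI, if_pos rfl, hr0]
    simpa using le_max_right (r 1 - c 1) (0:ℝ)
  · have h0 := heq.1 0
    have h1 := heq.1 1
    simp only [uA, expT_const' hI, if_pos rfl, if_true, if_neg ha0, if_neg h10, hc0] at h0 h1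
    have hca : c a' = c 1 := le_antisymm (by linarith) (hc1_min a' ha0)
    have hra : r a' ≤ r 1 := hr1_max a' ha0 hca
    simp only [uP, expT_const' hI, if_neg ha0]
    have : r a' - s ≤ r 1 - c 1 := by linarith
    exact le_trans this (le_max_left _ _)

/-- In the principal-agent model with a risk-neutral agent under limited
liability, an action $a \in \{1,\dots,n\}$ is implementable (for some expected transfer)
if and only if $w_a \ge \max\{w_1, 0\}$, where $w_a = r_a - c_a$. -/
theorem implementable_action_iff_risk_neutral
    (n : ℕ) (hn : 1 ≤ n) (r c : Fin (n + 1) → ℝ)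
    (hr0 : r 0 = 0) (hc0 : c 0 = 0)
    (hr_nonneg : ∀ a, 0 ≤ r a)
    (hc_pos : ∀ a : Fin (n + 1), a ≠ 0 → 0 < c a)
    (hc1_min : ∀ a : Fin (n + 1), a ≠ 0 → c 1 ≤ c a)
    (hr1_max : ∀ a : Fin (n + 1), a ≠ 0 → c a = c 1 → r a ≤ r 1)
    (a : Fin (n + 1)) (ha : a ≠ 0) :
    ImplementsAction r c a ↔ max (r 1 - c 1) 0 ≤ r a - c a := by
  have h10 : (1 : Fin (n + 1)) ≠ 0 := by
    intro h
    have h1 : (1 : Fin (n + 1)).val = 1 := by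
      rw [Fin.val_one']; exact Nat.mod_eq_of_lt (by omega)
    rw [h] at h1
    simp at h1
  constructor
  · rintro ⟨k, hk, I, t, hI, ht0, ⟨hmaxA, htie⟩, hopt⟩
    have huA0 : uA c I t 0 = 0 := by simp [uA, expT, hc0]
    have hIR : c a ≤ expT I t a := by
      have h := hmaxA 0
      rw [huA0] at h
      simp only [uA] at h
      linarith
    have hPa : uP r I t a ≤ r a - c a := by
      simp only [uP]; linarith
    -- the zero contract has equilibrium action 0
    have heq0 : IsEquilibrium r c I (fun _ => (0:ℝ)) 0 := by
      constructor
      · intro b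
        simp only [uA, expT_zero_contract', hc0]
        rcases eq_or_ne b 0 with hb | hb
        · subst hb; simp [hc0]
        · linarith [hc_pos b hb]
      · intro b hb
        rcases eq_or_ne b 0 with hb0 | hb0
        · subst hb0; exact le_refl _
        · exfalso
          simp only [uA, expT_zero_contract', hc0] at hb
          linarith [hc_pos b hb0]
    have h0le : (0:ℝ) ≤ uP r I t a := by
      have h := hopt (fun _ => 0) 0 (fun _ => le_refl 0) heq0
      have : uP r I (fun _ => (0:ℝ)) 0 = 0 := by
        simp [uP, expT_zero_contract', hr0]
      linarith
    have hw0 : (0:ℝ) ≤ r a - c a := le_trans h0le hPa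
    have hw1 : r 1 - c 1 ≤ r a - c a := by
      rcases le_or_gt 0 (r 1 - c 1) with hpos | hneg
      · have heq1 := equilibrium_one' r c h10 hr0 hc0 hc1_min hr1_max hpos hI
        have h := hopt (fun _ => c 1) 1 (fun _ => (hc_pos 1 h10).le) heq1
        have hP1 : uP r I (fun _ => c 1) 1 = r 1 - c 1 := by
          simp only [uP, expT_const' hI, if_neg h10]
        linarith
      · linarith
    exact max_le hw1 hw0
  · intro h
    have hw1 : r 1 - c 1 ≤ r a - c a := le_trans (le_max_left _ _) h
    have hw0 : (0:ℝ) ≤ r a - c a := le_trans (le_max_right _ _) h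
    by_cases ha1 : a = 1
    · -- trivial (uninformative) information structure with one signal
      subst ha1
      have hS : Stochastic (n := n) (k := 1) (fun _ _ => 1) := by
        intro b hb
        exact ⟨fun _ => zero_le_one, by simp⟩
      refine ⟨1, Nat.one_pos, fun _ _ => 1, fun _ => c 1, hS, fun _ => (hc_pos 1 h10).le,
        equilibrium_one' r c h10 hr0 hc0 hc1_min hr1_max hw0 hS, ?_⟩
      intro t' a' ht' heq'
      have hconst : t' = fun _ => t' 0 := funext fun j => by rw [Subsingleton.elim j 0]
      rw [hconst] at heq' ⊢
      have hb := const_uP_bound' r c h10 hr0 hc0 hc1_min hr1_max hS (t' 0) a' heq'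
      have hP1 : uP (k := 1) r (fun _ _ => (1:ℝ)) (fun _ => c 1) 1 = r 1 - c 1 := by
        simp only [uP, expT_const' hS, if_neg h10]
      rw [hP1]
      exact le_trans hb (max_le (le_refl _) hw0)
    · -- pool every action except `a` on the second signal
      have h1a : (1 : Fin (n + 1)) ≠ a := fun hh => ha1 hh.symm
      set I2 : Fin (n + 1) → Fin 2 → ℝ :=
        fun b j => if b = a then (if j = 0 then 1 else 0) else (if j = 0 then 0 else 1)
        with hI2
      set t2 : Fin 2 → ℝ := fun j => if j = 0 then c a else 0 with ht2
      have hS : Stochastic I2 := by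
        intro b hb
        constructor
        · intro j
          simp only [hI2]
          split_ifs <;> norm_num
        · rw [Fin.sum_univ_two]
          simp only [hI2]
          by_cases hba : b = a <;> simp [hba]
      have hexp : ∀ (t' : Fin 2 → ℝ) (b : Fin (n + 1)), b ≠ 0 →
          expT I2 t' b = if b = a then t' 0 else t' 1 := by
        intro t' b hb
        rw [expT, if_neg hb, Fin.sum_univ_two]
        by_cases hba : b = a <;> simp [hI2, hba]
      have hexp0 : ∀ t' : Fin 2 → ℝ, expT I2 t' 0 = 0 := fun t' => by
        rw [expT, if_pos rfl]
      have hexpa : expT I2 t2 a = c a := by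
        rw [hexp t2 a ha, if_pos rfl]; simp [ht2]
      have hexpb : ∀ b, b ≠ 0 → b ≠ a → expT I2 t2 b = 0 := by
        intro b hb hba
        rw [hexp t2 b hb, if_neg hba]; simp [ht2]
      have heqa : IsEquilibrium r c I2 t2 a := by
        constructor
        · intro b
          simp only [uA]
          rw [hexpa]
          rcases eq_or_ne b 0 with hb0 | hb0
          · subst hb0; rw [hexp0]; simp [hc0]
          rcases eq_or_ne b a with hba | hba
          · subst hba; rw [hexpa]
          · rw [hexpb b hb0 hba]; linarith [hc_pos b hb0]
        · intro b hb
          simp only [uA] at hb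
          simp only [uP]
          rw [hexpa] at hb ⊢
          rcases eq_or_ne b 0 with hb0 | hb0
          · subst hb0; rw [hexp0, hr0]; linarith
          rcases eq_or_ne b a with hba | hba
          · subst hba; rw [hexpa]
          · exfalso
            rw [hexpb b hb0 hba] at hb
            linarith [hc_pos b hb0]
      have ht2n : ∀ j, 0 ≤ t2 j := by
        intro j
        simp only [ht2]
        split_ifs
        · exact (hc_pos a ha).le
        · exact le_refl 0
      refine ⟨2, by norm_num, I2, t2, hS, ht2n, heqa, ?_⟩
      intro t' a' ht' heq'
      have hPa : uP r I2 t2 a = r a - c a := by simp only [uP]; rw [hexpa]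
      rw [hPa]
      rcases eq_or_ne a' 0 with h0 | h0
      · subst h0
        simp only [uP]
        rw [hexp0, hr0]
        linarith
      rcases eq_or_ne a' a with haa | haa
      · have hIR := heq'.1 0
        simp only [uA] at hIR
        rw [hexp0, hexp t' a' h0, if_pos haa, hc0, haa] at hIR
        simp only [uP]
        rw [hexp t' a' h0, if_pos haa, haa]
        linarith
      · have h0' := heq'.1 0
        have h1' := heq'.1 1
        simp only [uA] at h0' h1'
        rw [hexp0, hc0, hexp t' a' h0, if_neg haa] at h0'
        rw [hexp t' 1 h10, if_neg h1a, hexp t' a' h0, if_neg haa] at h1'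
        have hca : c a' = c 1 := le_antisymm (by linarith) (hc1_min a' h0)
        have hra : r a' ≤ r 1 := hr1_max a' h0 hca
        simp only [uP]
        rw [hexp t' a' h0, if_neg haa]
        linarith
end

section
/- Consider the principal-agent model with a risk-neutral agent under limited liability. Let a ∈ {1,...,n} and s > 0 satisfy s ≥ c_a and r_a − s ≥ max{w_1, 0}. Define p = 1 − (c_a − c_1)/s and the binary-signal (k = 2) information structure I by I_i = (1,0) for i = a and for every action i with c_i > c_a, and I_i = (p, 1−p) for all remaining actions i ∈ {1,...,n}. Then under I, the contract t_* = (s, 0) is an optimal contract, the agent's equilibrium action under t_* is a, and the expected transfer is s; in particular I implements the action-transfer pair (a,s) and the utility profile (r_a − s, s − c_a). -/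
open Finset

/-- The explicit binary-signal construction for a risk-neutral agent:
pooling action $a$ and all costlier actions on the "high" signal (signal `0`), and
giving the remaining actions the high signal with probability $p = 1-(c_a-c_1)/s$, makes
the contract $t_* = (s, 0)$ optimal; the equilibrium action is $a$, the expected
transfer is $s$, and the utility profile $(r_a - s, s - c_a)$ is implemented. -/
theorem construction_risk_neutral
    (n : ℕ) (hn : 1 ≤ n) (r c : Fin (n + 1) → ℝ)
    (hr0 : r 0 = 0) (hc0 : c 0 = 0)
    (hr_nonneg : ∀ a, 0 ≤ r a)
    (hc_pos : ∀ a : Fin (n + 1), a ≠ 0 → 0 < c a)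
    (hc1_min : ∀ a : Fin (n + 1), a ≠ 0 → c 1 ≤ c a)
    (hr1_max : ∀ a : Fin (n + 1), a ≠ 0 → c a = c 1 → r a ≤ r 1)
    (a : Fin (n + 1)) (ha : a ≠ 0) (s : ℝ) (hs_pos : 0 < s)
    (hs_ge : c a ≤ s) (hs_le : max (r 1 - c 1) 0 ≤ r a - s) :
    let p : ℝ := 1 - (c a - c 1) / s
    let I : Fin (n + 1) → Fin 2 → ℝ := fun i j =>
      if i = a ∨ c a < c i then (if j = 0 then 1 else 0)
      else (if j = 0 then p else 1 - p)
    let t : Fin 2 → ℝ := fun j => if j = 0 then s else 0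
    Stochastic I ∧ OptimalAt r c I t a ∧ expT I t a = s ∧
      uP r I t a = r a - s ∧ uA c I t a = s - c a ∧
      ImplementsPair r c a s ∧ ImplementsProfile r c (r a - s) (s - c a) := by

  intro p I t
  have h1ne0 : (1 : Fin (n + 1)) ≠ 0 := by
    simp [Fin.ext_iff, Fin.val_one', Nat.mod_eq_of_lt (by omega : 1 < n + 1)]
  have hca : c 1 ≤ c a := hc1_min a ha
  have hcapos : 0 < c a := hc_pos a ha
  have hc1pos : 0 < c 1 := hc_pos 1 h1ne0
  have hp : p = 1 - (c a - c 1) / s := rfl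
  have hp1 : p ≤ 1 := by
    have : 0 ≤ (c a - c 1) / s := div_nonneg (by linarith) hs_pos.le
    rw [hp]; linarith
  have hp0 : 0 < p := by
    have : (c a - c 1) / s < 1 := (div_lt_one hs_pos).2 (by linarith)
    rw [hp]; linarith
  have h1max : r 1 - c 1 ≤ r a - s := le_trans (le_max_left _ _) hs_le
  have h0max : (0 : ℝ) ≤ r a - s := le_trans (le_max_right _ _) hs_le
  have hI : ∀ i j, I i j = if i = a ∨ c a < c i then (if j = 0 then (1:ℝ) else 0)
      else (if j = 0 then p else 1 - p) := fun i j => rfl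
  have ht0 : t 0 = s := rfl
  have ht1 : t 1 = (0 : ℝ) := rfl
  have hT : ∀ (t' : Fin 2 → ℝ) (i : Fin (n + 1)), i ≠ 0 →
      expT I t' i = I i 0 * t' 0 + I i 1 * t' 1 := by
    intro t' i hi
    simp [expT, hi, Fin.sum_univ_two]
  have hEA : ∀ (t' : Fin 2 → ℝ) (i : Fin (n + 1)), (i = a ∨ c a < c i) → i ≠ 0 →
      expT I t' i = t' 0 := by
    intro t' i h hi
    rw [hT t' i hi, hI i 0, hI i 1, if_pos h, if_pos h]
    norm_num
  have hEB : ∀ (t' : Fin 2 → ℝ) (i : Fin (n + 1)), ¬(i = a ∨ c a < c i) → i ≠ 0 →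
      expT I t' i = p * t' 0 + (1 - p) * t' 1 := by
    intro t' i h hi
    rw [hT t' i hi, hI i 0, hI i 1, if_neg h, if_neg h]
    norm_num
  have hE0 : ∀ (t' : Fin 2 → ℝ), expT I t' 0 = 0 := by intro t'; simp [expT]
  have hEta : expT I t a = s := by rw [hEA t a (Or.inl rfl) ha, ht0]
  -- Stochastic
  have hStoch : Stochastic I := by
    intro i hi
    constructor
    · intro j
      rw [hI i j]
      by_cases h : i = a ∨ c a < c i
      · rw [if_pos h]; split <;> norm_num
      · rw [if_neg h]; split <;> linarith
    · rw [Fin.sum_univ_two, hI i 0, hI i 1]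
      by_cases h : i = a ∨ c a < c i
      · rw [if_pos h, if_pos h]; norm_num
      · rw [if_neg h, if_neg h]; norm_num
  -- Equilibrium
  have hEq : IsEquilibrium r c I t a := by
    constructor
    · intro b
      simp only [uA]
      rw [hEta]
      by_cases hb0 : b = 0
      · rw [hb0, hE0, hc0]; linarith
      by_cases hbA : b = a ∨ c a < c b
      · rw [hEA t b hbA hb0, ht0]
        rcases hbA with h | h
        · rw [h]
        · linarith
      · rw [hEB t b hbA hb0, ht0, ht1]
        have := hc1_min b hb0
        have hps : p * s = s - (c a - c 1) := by rw [hp]; field_simp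
        linarith
    · intro b hb
      simp only [uP]
      rw [hEta]
      by_cases hb0 : b = 0
      · rw [hb0, hE0, hr0]; linarith
      by_cases hbA : b = a ∨ c a < c b
      · rcases hbA with h | h
        · rw [h, hEta]
        · exfalso
          simp only [uA] at hb
          rw [hEA t b (Or.inr h) hb0, ht0, hEta] at hb
          linarith
      · simp only [uA] at hb
        rw [hEB t b hbA hb0, ht0, ht1, hEta] at hb
        have hps : p * s = s - (c a - c 1) := by rw [hp]; field_simp
        have hcb : c b = c 1 := by linarith
        have hrb : r b ≤ r 1 := hr1_max b hb0 hcb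
        rw [hEB t b hbA hb0, ht0, ht1]
        linarith
  -- Optimality bound
  have hOpt : ∀ (t' : Fin 2 → ℝ) (a' : Fin (n + 1)), (∀ j, 0 ≤ t' j) →
      IsEquilibrium r c I t' a' → uP r I t' a' ≤ r a - s := by
    intro t' a' ht' heq
    obtain ⟨hmax, -⟩ := heq
    have hx := ht' 0
    have hy := ht' 1
    by_cases h0' : a' = 0
    · rw [h0']; simp only [uP]; rw [hE0, hr0]; linarith
    have hIR : c a' ≤ expT I t' a' := by
      have h0 := hmax 0
      simp only [uA] at h0
      rw [hE0, hc0] at h0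
      linarith
    by_cases ha' : a' = a
    · subst ha'
      have hEa : expT I t' a' = t' 0 := hEA t' a' (Or.inl rfl) h0'
      have hxs : s ≤ t' 0 := by
        by_cases hc1a : c 1 = c a'
        · have hra1 : r a' ≤ r 1 := hr1_max a' h0' hc1a.symm
          rw [hEa] at hIR
          linarith
        · have hlt : c 1 < c a' := lt_of_le_of_ne hca hc1a
          have h1a : (1 : Fin (n + 1)) ≠ a' := fun h => hc1a (by rw [h])
          have h1B : ¬((1 : Fin (n + 1)) = a' ∨ c a' < c 1) := by
            push_neg; exact ⟨h1a, hca⟩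
          have hm := hmax 1
          simp only [uA] at hm
          rw [hEB t' 1 h1B h1ne0, hEa] at hm
          have h2 : c a' - c 1 ≤ (1 - p) * (t' 0 - t' 1) := by nlinarith
          have h1p : 1 - p = (c a' - c 1) / s := by rw [hp]; ring
          rw [h1p, div_mul_eq_mul_div, le_div_iff₀ hs_pos] at h2
          have h3 : s ≤ t' 0 - t' 1 :=
            le_of_mul_le_mul_left (by linarith) (by linarith : (0:ℝ) < c a' - c 1)
          linarith
      simp only [uP]
      rw [hEa]
      linarith
    · by_cases hA' : a' = a ∨ c a < c a'
      · exfalso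
        rcases hA' with h | h
        · exact ha' h
        · have hm := hmax a
          simp only [uA] at hm
          rw [hEA t' a (Or.inl rfl) ha, hEA t' a' (Or.inr h) h0'] at hm
          linarith
      · have hE' : expT I t' a' = p * t' 0 + (1 - p) * t' 1 := hEB t' a' hA' h0'
        have hc' : c a' = c 1 := by
          by_cases h1a : (1 : Fin (n + 1)) = a
          · push_neg at hA'
            have hca1 : c a = c 1 := by rw [← h1a]
            have := hc1_min a' h0'
            linarith [hA'.2]
          · have h1B : ¬((1 : Fin (n + 1)) = a ∨ c a < c 1) := by
              push_neg; exact ⟨h1a, hca⟩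
            have hm := hmax 1
            simp only [uA] at hm
            rw [hEB t' 1 h1B h1ne0, hE'] at hm
            have := hc1_min a' h0'
            linarith
        have hr' : r a' ≤ r 1 := hr1_max a' h0' hc'
        simp only [uP]
        rw [hc'] at hIR
        linarith
  have hOptAt : OptimalAt r c I t a := by
    refine ⟨?_, hEq, ?_⟩
    · intro j
      show (0:ℝ) ≤ if j = 0 then s else 0
      split <;> linarith
    · intro t' a' ht' heq
      have h := hOpt t' a' ht' heq
      simp only [uP] at h ⊢
      rw [hEta]
      exact h
  have huP : uP r I t a = r a - s := by simp only [uP]; rw [hEta]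
  have huA : uA c I t a = s - c a := by simp only [uA]; rw [hEta]
  exact ⟨hStoch, hOptAt, hEta, huP, huA,
    ⟨2, by norm_num, I, t, hStoch, hOptAt, hEta⟩,
    ⟨2, by norm_num, I, t, a, hStoch, hOptAt, huP, huA⟩⟩
end

section
/- Consider the principal-agent model with a risk-averse agent under limited liability, with von Neumann-Morgenstern function v. An action a ∈ {1,...,n} is implementable (for some expected transfer) if and only if r_a − v⁻¹(c_a) ≥ max{r_1 − v⁻¹(c_1), 0}. -/
open Finset Filter

/-- Risk-averse agent's utility at action `a`, with von Neumann-Morgenstern function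
`v`: the expected `v`-value of the transfer minus the cost of the action. -/
noncomputable def uAV {n k : ℕ} (v : ℝ → ℝ) (c : Fin (n + 1) → ℝ)
    (I : Fin (n + 1) → Fin k → ℝ) (t : Fin k → ℝ) (a : Fin (n + 1)) : ℝ :=
  (if a = 0 then 0 else ∑ j, I a j * v (t j)) - c a

/-- `a` is an equilibrium action for the contract `t` (risk-averse agent): it maximizes
the agent's utility and, among the agent's optimal actions, maximizes the principal's
utility (ties are broken in the principal's favor). -/
def IsEquilibriumV {n k : ℕ} (v : ℝ → ℝ) (r c : Fin (n + 1) → ℝ)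
    (I : Fin (n + 1) → Fin k → ℝ) (t : Fin k → ℝ) (a : Fin (n + 1)) : Prop :=
  (∀ b, uAV v c I t b ≤ uAV v c I t a) ∧
    ∀ b, uAV v c I t b = uAV v c I t a → uP r I t b ≤ uP r I t a

/-- `t` is an optimal limited-liability contract for `I` (risk-averse agent), with
equilibrium action `a`. -/
def OptimalAtV {n k : ℕ} (v : ℝ → ℝ) (r c : Fin (n + 1) → ℝ)
    (I : Fin (n + 1) → Fin k → ℝ) (t : Fin k → ℝ) (a : Fin (n + 1)) : Prop :=
  (∀ j, 0 ≤ t j) ∧ IsEquilibriumV v r c I t a ∧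
    ∀ (t' : Fin k → ℝ) (a' : Fin (n + 1)), (∀ j, 0 ≤ t' j) →
      IsEquilibriumV v r c I t' a' → uP r I t' a' ≤ uP r I t a

/-- The utility profile `(x, y)` is implementable (risk-averse agent). -/
def ImplementsProfileV {n : ℕ} (v : ℝ → ℝ) (r c : Fin (n + 1) → ℝ) (x y : ℝ) : Prop :=
  ∃ (k : ℕ) (_ : 0 < k) (I : Fin (n + 1) → Fin k → ℝ) (t : Fin k → ℝ) (a : Fin (n + 1)),
    Stochastic I ∧ OptimalAtV v r c I t a ∧ uP r I t a = x ∧ uAV v c I t a = y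

/-- The action `a` is implementable (risk-averse agent). -/
def ImplementsActionV {n : ℕ} (v : ℝ → ℝ) (r c : Fin (n + 1) → ℝ) (a : Fin (n + 1)) :
    Prop :=
  ∃ (k : ℕ) (_ : 0 < k) (I : Fin (n + 1) → Fin k → ℝ) (t : Fin k → ℝ),
    Stochastic I ∧ OptimalAtV v r c I t a

/-- The action-transfer pair `(a, s)` is implementable (risk-averse agent). -/
def ImplementsPairV {n : ℕ} (v : ℝ → ℝ) (r c : Fin (n + 1) → ℝ) (a : Fin (n + 1))
    (s : ℝ) : Prop :=
  ∃ (k : ℕ) (_ : 0 < k) (I : Fin (n + 1) → Fin k → ℝ) (t : Fin k → ℝ),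
    Stochastic I ∧ OptimalAtV v r c I t a ∧ expT I t a = s

/-- In the principal-agent model with a risk-averse agent under limited
liability, an action $a \in \{1,\dots,n\}$ is implementable (for some expected transfer)
if and only if $r_a - v^{-1}(c_a) \ge \max\{r_1 - v^{-1}(c_1), 0\}$. -/
theorem implementable_action_iff_risk_averse
    (n : ℕ) (hn : 1 ≤ n) (r c : Fin (n + 1) → ℝ)
    (hr0 : r 0 = 0) (hc0 : c 0 = 0)
    (hr_nonneg : ∀ a, 0 ≤ r a)
    (hc_pos : ∀ a : Fin (n + 1), a ≠ 0 → 0 < c a)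
    (hc1_min : ∀ a : Fin (n + 1), a ≠ 0 → c 1 ≤ c a)
    (hr1_max : ∀ a : Fin (n + 1), a ≠ 0 → c a = c 1 → r a ≤ r 1)
    (v : ℝ → ℝ)
    (hv_conc : ConcaveOn ℝ (Set.Ici 0) v)
    (hv_mono : StrictMonoOn v (Set.Ici 0))
    (hv0 : v 0 = 0)
    (hv_nonneg : ∀ z : ℝ, 0 ≤ z → 0 ≤ v z)
    (hv_lim : Tendsto (fun z : ℝ => v z / z) atTop (nhds 0))
    (vinv : ℝ → ℝ)
    (hvinv_nonneg : ∀ u : ℝ, 0 ≤ u → 0 ≤ vinv u)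
    (hvinv : ∀ u : ℝ, 0 ≤ u → v (vinv u) = u)
    (a : Fin (n + 1)) (ha : a ≠ 0) :
    ImplementsActionV v r c a ↔ max (r 1 - vinv (c 1)) 0 ≤ r a - vinv (c a) := by
  have h1ne : (1 : Fin (n + 1)) ≠ 0 := by
    simp [Fin.ext_iff, Fin.val_one', Nat.mod_eq_of_lt (by omega : 1 < n + 1)]
  have hc1pos : 0 < c 1 := hc_pos 1 h1ne
  have hinv_le : ∀ x u : ℝ, 0 ≤ x → 0 ≤ u → u ≤ v x → vinv u ≤ x := by
    intro x u hx hu hvx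
    by_contra hlt
    push_neg at hlt
    have h2 := hv_mono (Set.mem_Ici.2 hx) (Set.mem_Ici.2 (hvinv_nonneg u hu)) hlt
    rw [hvinv u hu] at h2
    linarith
  constructor
  · rintro ⟨k, hk, I, t, hI, ht0, ⟨hIC, htie⟩, hmax⟩
    -- the zero contract has equilibrium action 0
    have hz : IsEquilibriumV v r c I (fun _ => 0) 0 := by
      constructor
      · intro b
        by_cases hb : b = 0
        · subst hb; exact le_refl _
        · simp only [uAV, if_neg hb, hv0, mul_zero, Finset.sum_const_zero, if_pos rfl, if_true, hc0]
          linarith [hc_pos b hb]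
      · intro b hb
        by_cases hb0 : b = 0
        · subst hb0; exact le_refl _
        · exfalso
          simp only [uAV, if_neg hb0, hv0, mul_zero, Finset.sum_const_zero, if_pos rfl, if_true,
            hc0] at hb
          linarith [hc_pos b hb0]
    have h0le : (0 : ℝ) ≤ uP r I t a := by
      have h3 := hmax (fun _ => 0) 0 (fun _ => le_refl 0) hz
      simpa [uP, expT, hr0] using h3
    have hIa := hI a ha
    have hta_nonneg : 0 ≤ ∑ j, I a j * t j :=
      Finset.sum_nonneg fun j _ => mul_nonneg (hIa.1 j) (ht0 j)
    have hjensen : ∑ j, I a j * v (t j) ≤ v (∑ j, I a j * t j) := by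
      have h4 := hv_conc.le_map_sum (t := Finset.univ) (w := I a) (p := t)
        (fun j _ => hIa.1 j) hIa.2 (fun j _ => Set.mem_Ici.2 (ht0 j))
      simpa [smul_eq_mul] using h4
    have hICa : c a ≤ ∑ j, I a j * v (t j) := by
      have h5 := hIC 0
      simp only [uAV, if_pos rfl, if_true, if_neg ha, hc0] at h5
      linarith
    have hta_ge : vinv (c a) ≤ ∑ j, I a j * t j :=
      hinv_le _ _ hta_nonneg (hc_pos a ha).le (hICa.trans hjensen)
    have hmain : uP r I t a ≤ r a - vinv (c a) := by
      simp only [uP, expT, if_neg ha]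
      linarith
    refine max_le ?_ (le_trans h0le hmain)
    refine le_of_forall_pos_le_add ?_
    intro ε hε
    set s : ℝ := vinv (c 1) + ε with hs
    have hs0 : 0 ≤ s := add_nonneg (hvinv_nonneg _ hc1pos.le) hε.le
    have hvs : c 1 < v s := by
      have h6 := hv_mono (Set.mem_Ici.2 (hvinv_nonneg _ hc1pos.le)) (Set.mem_Ici.2 hs0)
        (by simp [hs]; linarith)
      rwa [hvinv _ hc1pos.le] at h6
    have hsumv : ∀ b : Fin (n + 1), b ≠ 0 → (∑ j, I b j * v s) = v s := by
      intro b hb; rw [← Finset.sum_mul, (hI b hb).2, one_mul]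
    have hsums : ∀ b : Fin (n + 1), b ≠ 0 → (∑ j, I b j * s) = s := by
      intro b hb; rw [← Finset.sum_mul, (hI b hb).2, one_mul]
    have heq1 : IsEquilibriumV v r c I (fun _ => s) 1 := by
      constructor
      · intro b
        by_cases hb : b = 0
        · subst hb
          simp only [uAV, if_pos rfl, if_true, if_neg h1ne, hsumv 1 h1ne, hc0]
          linarith
        · simp only [uAV, if_neg hb, if_neg h1ne, hsumv b hb, hsumv 1 h1ne]
          linarith [hc1_min b hb]
      · intro b hb
        by_cases hb0 : b = 0
        · exfalso
          subst hb0
          simp only [uAV, if_pos rfl, if_true, if_neg h1ne, hsumv 1 h1ne, hc0] at hb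
          linarith
        · have hcb : c b = c 1 := by
            simp only [uAV, if_neg hb0, if_neg h1ne, hsumv b hb0, hsumv 1 h1ne] at hb
            linarith
          simp only [uP, expT, if_neg hb0, if_neg h1ne, hsums b hb0, hsums 1 h1ne]
          linarith [hr1_max b hb0 hcb]
    have h7 := hmax (fun _ => s) 1 (fun _ => hs0) heq1
    have hup : uP r I (fun _ => s) 1 = r 1 - s := by
      simp only [uP, expT, if_neg h1ne, hsums 1 h1ne]
    rw [hup] at h7
    have h8 := h7.trans hmain
    simp only [hs] at h8
    linarith
  · intro h
    have hmax0 : (0 : ℝ) ≤ r a - vinv (c a) := le_trans (le_max_right _ _) h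
    have hmax1 : r 1 - vinv (c 1) ≤ r a - vinv (c a) := le_trans (le_max_left _ _) h
    by_cases ha1 : a = 1
    · -- one trivial signal
      subst ha1
      refine ⟨1, one_pos, fun _ _ => 1, fun _ => vinv (c 1), fun b hb => ⟨fun j => zero_le_one, by simp⟩, fun j => hvinv_nonneg _ hc1pos.le, ⟨?_, ?_⟩, ?_⟩
      · intro b
        by_cases hb : b = 0
        · subst hb
          simp only [uAV, if_pos rfl, if_true, if_neg h1ne, hc0, Fin.sum_univ_one, one_mul,
            hvinv _ hc1pos.le]
          linarith
        · simp only [uAV, if_neg hb, if_neg h1ne, Fin.sum_univ_one, one_mul]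
          linarith [hc1_min b hb]
      · intro b hb
        by_cases hb0 : b = 0
        · subst hb0
          simp only [uP, expT, if_pos rfl, if_true, if_neg h1ne, hr0, Fin.sum_univ_one, one_mul]
          linarith
        · have hcb : c b = c 1 := by
            simp only [uAV, if_neg hb0, if_neg h1ne, Fin.sum_univ_one, one_mul] at hb
            linarith
          simp only [uP, expT, if_neg hb0, if_neg h1ne, Fin.sum_univ_one, one_mul]
          linarith [hr1_max b hb0 hcb]
      · rintro t' a' ht' ⟨hIC', -⟩
        have hup1 : uP r (fun _ _ => (1:ℝ) : Fin (n+1) → Fin 1 → ℝ) (fun _ => vinv (c 1)) 1 = r 1 - vinv (c 1) := by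
          simp only [uP, expT, if_neg h1ne, Fin.sum_univ_one, one_mul]
        rw [hup1]
        by_cases ha0 : a' = 0
        · subst ha0
          simp only [uP, expT, if_pos rfl, if_true, hr0]
          linarith
        · have hca' : c a' = c 1 := by
            have h9 := hIC' 1
            simp only [uAV, if_neg ha0, if_neg h1ne, Fin.sum_univ_one, one_mul] at h9
            linarith [hc1_min a' ha0]
          have hv0' : c 1 ≤ v (t' 0) := by
            have h10 := hIC' 0
            simp only [uAV, if_pos rfl, if_true, if_neg ha0, hc0, Fin.sum_univ_one, one_mul] at h10
            linarith
          have ht'0 : vinv (c 1) ≤ t' 0 := hinv_le _ _ (ht' 0) hc1pos.le hv0'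
          simp only [uP, expT, if_neg ha0, Fin.sum_univ_one, one_mul]
          linarith [hr1_max a' ha0 hca']
    · -- two signals: a → signal 1, all other actions → signal 0
      set I : Fin (n + 1) → Fin 2 → ℝ :=
        fun b j => if b = a then (if j = 1 then 1 else 0) else (if j = 0 then 1 else 0) with hI
      set t : Fin 2 → ℝ := fun j => if j = 1 then vinv (c a) else 0 with ht
      have hca_pos := hc_pos a ha
      have hexpa : ∀ u : Fin 2 → ℝ, ∑ j, I a j * u j = u 1 := by
        intro u
        simp [hI, Fin.sum_univ_two]
      have hexpb : ∀ b : Fin (n + 1), b ≠ a → ∀ u : Fin 2 → ℝ, ∑ j, I b j * u j = u 0 := by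
        intro b hb u
        simp [hI, hb, Fin.sum_univ_two]
      have ht1 : t 1 = vinv (c a) := by simp [ht]
      have ht0' : t 0 = 0 := by simp [ht]
      have h1a : (1 : Fin (n + 1)) ≠ a := fun h' => ha1 h'.symm
      refine ⟨2, two_pos, I, t, ?_, ?_, ⟨?_, ?_⟩, ?_⟩
      · intro b hb
        constructor
        · intro j
          simp only [hI]
          split_ifs <;> norm_num
        · by_cases hba : b = a <;> simp [hI, hba, Fin.sum_univ_two]
      · intro j
        simp only [ht]
        split_ifs
        · exact hvinv_nonneg _ hca_pos.le
        · exact le_refl 0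
      · intro b
        by_cases hb : b = 0
        · subst hb
          simp only [uAV, if_pos rfl, if_true, if_neg ha, hexpa, ht1, hvinv _ hca_pos.le, hc0]
          linarith
        · by_cases hba : b = a
          · subst hba; exact le_refl _
          · simp only [uAV, if_neg hb, if_neg ha, hexpa, hexpb b hba, ht1, ht0', hv0,
              hvinv _ hca_pos.le]
            linarith [hc_pos b hb]
      · intro b hb
        by_cases hb0 : b = 0
        · subst hb0
          simp only [uP, expT, if_pos rfl, if_true, if_neg ha, hr0, hexpa, ht1]
          linarith
        · by_cases hba : b = a
          · subst hba; exact le_refl _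
          · exfalso
            simp only [uAV, if_neg hb0, if_neg ha, hexpa, hexpb b hba, ht1, ht0', hv0,
              hvinv _ hca_pos.le] at hb
            linarith [hc_pos b hb0]
      · rintro t' a' ht' ⟨hIC', -⟩
        have hupa : uP r I t a = r a - vinv (c a) := by
          simp only [uP, expT, if_neg ha, hexpa, ht1]
        rw [hupa]
        by_cases ha0 : a' = 0
        · subst ha0
          simp only [uP, expT, if_pos rfl, if_true, hr0]
          linarith
        · by_cases haa : a' = a
          · subst haa
            have hv1 : c a' ≤ v (t' 1) := by
              have h11 := hIC' 0
              simp only [uAV, if_pos rfl, if_true, if_neg ha0, hexpa, hc0] at h11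
              linarith
            have ht'1 : vinv (c a') ≤ t' 1 := hinv_le _ _ (ht' 1) (hc_pos a' ha0).le hv1
            simp only [uP, expT, if_neg ha0, hexpa]
            linarith
          · have hca' : c a' = c 1 := by
              have h12 := hIC' 1
              simp only [uAV, if_neg ha0, if_neg h1ne, hexpb a' haa, hexpb 1 h1a] at h12
              linarith [hc1_min a' ha0]
            have hv0'' : c 1 ≤ v (t' 0) := by
              have h13 := hIC' 0
              simp only [uAV, if_pos rfl, if_true, if_neg ha0, hexpb a' haa, hc0] at h13
              linarith
            have ht'0 : vinv (c 1) ≤ t' 0 := hinv_le _ _ (ht' 0) hc1pos.le hv0''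
            simp only [uP, expT, if_neg ha0, hexpb a' haa]
            linarith [hr1_max a' ha0 hca']
end

section
/- Consider the principal-agent model with a risk-averse agent under limited liability, with von Neumann-Morgenstern function v. If an action a ∈ {1,...,n} is implementable (i.e., r_a − v⁻¹(c_a) ≥ max{r_1 − v⁻¹(c_1), 0}), then an action-transfer pair (a,s) is implementable if and only if s lies in the interval [v⁻¹(c_a), r_a − max{r_1 − v⁻¹(c_1), 0}]. -/
open Finset Filter

/- ## Auxiliary lemmas about the inverse utility function -/

lemma vinv_le_of_le_v {v vinv : ℝ → ℝ} (hv_mono : StrictMonoOn v (Set.Ici 0))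
    (hvinv_nonneg : ∀ u, 0 ≤ u → 0 ≤ vinv u) (hvinv : ∀ u, 0 ≤ u → v (vinv u) = u)
    {z u : ℝ} (hz : 0 ≤ z) (hu : 0 ≤ u) (h : u ≤ v z) : vinv u ≤ z := by
  by_contra h'
  push_neg at h'
  have := hv_mono (Set.mem_Ici.2 hz) (Set.mem_Ici.2 (hvinv_nonneg u hu)) h'
  rw [hvinv u hu] at this; linarith

lemma le_vinv_of_v_le {v vinv : ℝ → ℝ} (hv_mono : StrictMonoOn v (Set.Ici 0))
    (hvinv_nonneg : ∀ u, 0 ≤ u → 0 ≤ vinv u) (hvinv : ∀ u, 0 ≤ u → v (vinv u) = u)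
    {z u : ℝ} (hz : 0 ≤ z) (hu : 0 ≤ u) (h : v z ≤ u) : z ≤ vinv u := by
  by_contra h'
  push_neg at h'
  have := hv_mono (Set.mem_Ici.2 (hvinv_nonneg u hu)) (Set.mem_Ici.2 hz) h'
  rw [hvinv u hu] at this; linarith

lemma vinv_mono {v vinv : ℝ → ℝ} (hv_mono : StrictMonoOn v (Set.Ici 0))
    (hvinv_nonneg : ∀ u, 0 ≤ u → 0 ≤ vinv u) (hvinv : ∀ u, 0 ≤ u → v (vinv u) = u)
    {u₁ u₂ : ℝ} (h1 : 0 ≤ u₁) (h2 : 0 ≤ u₂) (h : u₁ ≤ u₂) : vinv u₁ ≤ vinv u₂ :=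
  vinv_le_of_le_v hv_mono hvinv_nonneg hvinv (hvinv_nonneg u₂ h2) h1
    (by rw [hvinv u₂ h2]; exact h)

lemma vinv_v {v vinv : ℝ → ℝ} (hv_mono : StrictMonoOn v (Set.Ici 0))
    (hvinv_nonneg : ∀ u, 0 ≤ u → 0 ≤ vinv u) (hvinv : ∀ u, 0 ≤ u → v (vinv u) = u)
    {z : ℝ} (hz : 0 ≤ z) (hvz : 0 ≤ v z) : vinv (v z) = z :=
  le_antisymm (vinv_le_of_le_v hv_mono hvinv_nonneg hvinv hz hvz le_rfl)
    (le_vinv_of_v_le hv_mono hvinv_nonneg hvinv hz hvz le_rfl)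

lemma vinv_convexOn {v vinv : ℝ → ℝ} (hv_conc : ConcaveOn ℝ (Set.Ici 0) v)
    (hv_mono : StrictMonoOn v (Set.Ici 0))
    (hvinv_nonneg : ∀ u, 0 ≤ u → 0 ≤ vinv u) (hvinv : ∀ u, 0 ≤ u → v (vinv u) = u) :
    ConvexOn ℝ (Set.Ici 0) vinv := by
  refine ⟨convex_Ici 0, fun x hx y hy p q hp hq hpq => ?_⟩
  simp only [smul_eq_mul]
  have hx' : (0:ℝ) ≤ x := hx
  have hy' : (0:ℝ) ≤ y := hy
  have hvx := hvinv_nonneg x hx'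
  have hvy := hvinv_nonneg y hy'
  have hcomb : 0 ≤ p * vinv x + q * vinv y := by positivity
  refine vinv_le_of_le_v hv_mono hvinv_nonneg hvinv hcomb (by positivity) ?_
  have := hv_conc.2 (Set.mem_Ici.2 hvx) (Set.mem_Ici.2 hvy) hp hq hpq
  simp only [smul_eq_mul, hvinv x hx', hvinv y hy'] at this
  exact this

lemma cost_bound {f : ℝ → ℝ} (hconv : ConvexOn ℝ (Set.Ici 0) f)
    (hmono : ∀ u₁ u₂ : ℝ, 0 ≤ u₁ → 0 ≤ u₂ → u₁ ≤ u₂ → f u₁ ≤ f u₂)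
    {p q A B X Y : ℝ} (hp : 0 ≤ p) (hq : 0 < q)
    (hA : 0 ≤ A) (hAB : A ≤ B) (hX : 0 ≤ X) (hY : 0 ≤ Y)
    (hcon1 : p * A + q * B ≤ p * X + q * Y) (hcon2 : B - A ≤ Y - X) :
    p * f A + q * f B ≤ p * f X + q * f Y := by
  have hB : 0 ≤ B := hA.trans hAB
  rcases le_or_gt A X with hXA | hXA
  · have hYB : B ≤ Y := by linarith
    have h1 := hmono A X hA hX hXA
    have h2 := hmono B Y hB hY hYB
    nlinarith
  · rcases eq_or_lt_of_le hp with hp0 | hp0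
    · have hBY : B ≤ Y := by nlinarith
      have hf := hmono B Y hB hY hBY
      rw [← hp0]
      simp only [zero_mul, zero_add]
      exact mul_le_mul_of_nonneg_left hf hq.le
    · have hkey : p * (A - X) ≤ q * (Y - B) := by nlinarith
      have hYB : B < Y := by nlinarith
      have hXA' : X ≠ A := ne_of_lt hXA
      have hYA' : Y ≠ A := by intro h; rw [h] at hYB; linarith
      have hs1 : (f X - f A) / (X - A) ≤ (f Y - f A) / (Y - A) :=
        hconv.secant_mono (Set.mem_Ici.2 hA) (Set.mem_Ici.2 hX) (Set.mem_Ici.2 hY)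
          hXA' hYA' (by linarith)
      have hAY' : A ≠ Y := Ne.symm hYA'
      have hBY' : B ≠ Y := ne_of_lt hYB
      have hs2 : (f A - f Y) / (A - Y) ≤ (f B - f Y) / (B - Y) :=
        hconv.secant_mono (Set.mem_Ici.2 hY) (Set.mem_Ici.2 hA) (Set.mem_Ici.2 hB)
          hAY' hBY' hAB
      have e1 : (f X - f A) / (X - A) = (f A - f X) / (A - X) := by
        rw [← neg_div_neg_eq]; ring_nf
      have e2 : (f A - f Y) / (A - Y) = (f Y - f A) / (Y - A) := by
        rw [← neg_div_neg_eq]; ring_nf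
      have e3 : (f B - f Y) / (B - Y) = (f Y - f B) / (Y - B) := by
        rw [← neg_div_neg_eq]; ring_nf
      rw [e1] at hs1
      rw [e2, e3] at hs2
      set σ := (f Y - f B) / (Y - B) with hσ
      have hslope : (f A - f X) / (A - X) ≤ σ := le_trans hs1 hs2
      have hσ0 : 0 ≤ σ := by
        have := hmono B Y hB hY hYB.le
        apply div_nonneg <;> linarith
      have hAX0 : 0 < A - X := by linarith
      have hYB0 : 0 < Y - B := by linarith
      have h1 : f A - f X ≤ (A - X) * σ := by
        rw [div_le_iff₀ hAX0] at hslope; linarith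
      have h2 : f Y - f B = (Y - B) * σ := by
        rw [hσ]; field_simp [ne_of_gt hYB0]
      nlinarith [mul_le_mul_of_nonneg_right hkey hσ0,
        mul_le_mul_of_nonneg_left h1 hp]

lemma exists_q {v vinv : ℝ → ℝ}
    (hv_mono : StrictMonoOn v (Set.Ici 0))
    (hv_lim : Tendsto (fun z : ℝ => v z / z) atTop (nhds 0))
    (hvinv_nonneg : ∀ u, 0 ≤ u → 0 ≤ vinv u) (hvinv : ∀ u, 0 ≤ u → v (vinv u) = u)
    (hconv : ConvexOn ℝ (Set.Ici 0) vinv)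
    (hmono : ∀ u₁ u₂ : ℝ, 0 ≤ u₁ → 0 ≤ u₂ → u₁ ≤ u₂ → vinv u₁ ≤ vinv u₂)
    {c1 ca s : ℝ} (hc1 : 0 < c1) (hca : c1 < ca) (hs : vinv ca ≤ s) (hspos : 0 < s) :
    ∃ q : ℝ, 0 < q ∧ q ≤ 1 ∧
      (1 - q) * vinv c1 + q * vinv (c1 + (ca - c1) / q) = s := by
  set D := ca - c1 with hD
  have hDpos : 0 < D := by simp [hD]; linarith
  set K := s / D with hK
  have hKpos : 0 < K := div_pos hspos hDpos
  have hev : ∀ᶠ z in atTop, v z / z < 1 / K :=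
    hv_lim.eventually_lt_const (by positivity)
  obtain ⟨Z, hZ⟩ := eventually_atTop.1 hev
  set w := max D (max (Z / K) 1) with hw
  have hwD : D ≤ w := le_max_left _ _
  have hw1 : (1 : ℝ) ≤ w := le_trans (le_max_right _ _) (le_max_right _ _)
  have hwpos : 0 < w := lt_of_lt_of_le one_pos hw1
  have hzZ : Z ≤ K * w := by
    have h1 : Z / K ≤ w := le_trans (le_max_left _ _) (le_max_right _ _)
    calc Z = K * (Z / K) := by field_simp
    _ ≤ K * w := by nlinarith
  have hKw : v (K * w) < w := by
    have := hZ (K * w) hzZ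
    rw [div_lt_div_iff₀ (by positivity) hKpos] at this
    nlinarith
  have hvinvw : K * w ≤ vinv w :=
    le_vinv_of_v_le hv_mono hvinv_nonneg hvinv (by positivity) hwpos.le hKw.le
  set q0 := D / w with hq0
  have hq0pos : 0 < q0 := div_pos hDpos hwpos
  have hq01 : q0 ≤ 1 := by rw [hq0, div_le_one hwpos]; exact hwD
  set C := fun q : ℝ => (1 - q) * vinv c1 + q * vinv (c1 + D / q) with hC
  have hCq0 : s ≤ C q0 := by
    have hDq0 : D / q0 = w := by rw [hq0]; field_simp
    have h1 : vinv w ≤ vinv (c1 + w) := hmono w (c1 + w) hwpos.le (by linarith) (by linarith)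
    have h2 : 0 ≤ vinv c1 := hvinv_nonneg c1 hc1.le
    have h3 : q0 * (K * w) ≤ q0 * vinv w := by nlinarith
    have h4 : q0 * (K * w) = s := by
      rw [hq0, hK]; field_simp
    simp only [hC, hDq0]
    nlinarith
  have hC1 : C 1 = vinv ca := by simp [hC, hD]
  have hcont : ContinuousOn vinv (Set.Ioi 0) :=
    (hconv.subset Set.Ioi_subset_Ici_self (convex_Ioi 0)).continuousOn isOpen_Ioi
  have harg : ContinuousOn (fun q : ℝ => c1 + D / q) (Set.Icc q0 1) :=
    continuousOn_const.add (continuousOn_const.div continuousOn_id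
      (fun x hx => ne_of_gt (lt_of_lt_of_le hq0pos hx.1)))
  have hcomp : ContinuousOn (fun q : ℝ => vinv (c1 + D / q)) (Set.Icc q0 1) :=
    hcont.comp harg (fun x hx => Set.mem_Ioi.2 (by
      have : 0 < D / x := div_pos hDpos (lt_of_lt_of_le hq0pos hx.1)
      linarith))
  have hCcont : ContinuousOn C (Set.Icc q0 1) :=
    ((continuousOn_const.sub continuousOn_id).mul continuousOn_const).add
      (continuousOn_id.mul hcomp)
  have hmem : s ∈ Set.Icc (C 1) (C q0) := ⟨by rw [hC1]; exact hs, hCq0⟩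
  obtain ⟨q, hqmem, hCq⟩ := intermediate_value_Icc' hq01 hCcont hmem
  exact ⟨q, lt_of_lt_of_le hq0pos hqmem.1, hqmem.2, hCq⟩

/- ## Construction for the degenerate case `c a = c 1` (one signal) -/

lemma construct_k1 {n : ℕ} (r c : Fin (n + 1) → ℝ) (v vinv : ℝ → ℝ)
    (hr0 : r 0 = 0) (hc0 : c 0 = 0)
    (hc1_min : ∀ b : Fin (n + 1), b ≠ 0 → c 1 ≤ c b)
    (hr1_max : ∀ b : Fin (n + 1), b ≠ 0 → c b = c 1 → r b ≤ r 1)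
    (hv_mono : StrictMonoOn v (Set.Ici 0))
    (hv_nonneg : ∀ z : ℝ, 0 ≤ z → 0 ≤ v z)
    (hvinv_nonneg : ∀ u : ℝ, 0 ≤ u → 0 ≤ vinv u)
    (hvinv : ∀ u : ℝ, 0 ≤ u → v (vinv u) = u)
    (a : Fin (n + 1)) (ha : a ≠ 0) (h1ne : (1 : Fin (n + 1)) ≠ 0)
    (hc1p : 0 < c 1) (hca : c a = c 1) (hra : r a = r 1)
    (hram : 0 ≤ r a - vinv (c 1)) :
    ImplementsPairV v r c a (vinv (c 1)) := by
  set m := vinv (c 1) with hm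
  have hm0 : 0 ≤ m := hvinv_nonneg _ hc1p.le
  have hvm : v m = c 1 := hvinv _ hc1p.le
  set I₁ : Fin (n + 1) → Fin 1 → ℝ := fun _ _ => 1 with hI₁
  set t₁ : Fin 1 → ℝ := fun _ => m with ht₁
  have hAV : ∀ b : Fin (n + 1), b ≠ 0 → uAV v c I₁ t₁ b = c 1 - c b := by
    intro b hb
    simp [uAV, hI₁, ht₁, hb, hvm]
  have hAV0 : uAV v c I₁ t₁ 0 = 0 := by simp [uAV, hc0]
  have hEx : ∀ b : Fin (n + 1), b ≠ 0 → expT I₁ t₁ b = m := by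
    intro b hb
    simp [expT, hI₁, ht₁, hb]
  have hPV : ∀ b : Fin (n + 1), b ≠ 0 → uP r I₁ t₁ b = r b - m := by
    intro b hb
    rw [uP, hEx b hb]
  have hPV0 : uP r I₁ t₁ 0 = 0 := by simp [uP, expT, hr0]
  have hPVa : uP r I₁ t₁ a = r a - m := hPV a ha
  refine ⟨1, one_pos, I₁, t₁, ?_, ⟨fun _ => hm0, ⟨?_, ?_⟩, ?_⟩, hEx a ha⟩
  · intro b hb
    exact ⟨fun j => by norm_num [hI₁], by simp [hI₁]⟩
  · -- agent's optimality
    intro b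
    rw [hAV a ha, hca]
    by_cases hb : b = 0
    · rw [hb, hAV0]; linarith
    · rw [hAV b hb]; have := hc1_min b hb; linarith
  · -- tie-breaking
    intro b hb
    rw [hPVa]
    by_cases hb0 : b = 0
    · rw [hb0, hPV0]; linarith
    · rw [hAV b hb0, hAV a ha, hca] at hb
      have hcb : c b = c 1 := by linarith
      rw [hPV b hb0]
      have := hr1_max b hb0 hcb
      linarith
  · -- optimality of the contract
    intro t' a' ht' heq'
    obtain ⟨hA', _⟩ := heq'
    rw [hPVa]
    by_cases ha'0 : a' = 0
    · rw [ha'0]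
      have : uP r I₁ t' 0 = 0 := by simp [uP, expT, hr0]
      rw [this]; linarith
    · have hAV' : ∀ b : Fin (n + 1), b ≠ 0 → uAV v c I₁ t' b = v (t' 0) - c b := by
        intro b hb
        simp [uAV, hI₁, hb]
      have hAV0' : uAV v c I₁ t' 0 = 0 := by simp [uAV, hc0]
      have h1 : c a' ≤ c 1 := by
        have := hA' 1
        rw [hAV' 1 h1ne, hAV' a' ha'0] at this
        linarith
      have hceq : c a' = c 1 := le_antisymm h1 (hc1_min a' ha'0)
      have hIR : c 1 ≤ v (t' 0) := by
        have := hA' 0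
        rw [hAV0', hAV' a' ha'0, hceq] at this
        linarith
      have hE' : expT I₁ t' a' = t' 0 := by simp [expT, hI₁, ha'0]
      rw [uP, hE']
      have := hr1_max a' ha'0 hceq
      linarith [vinv_le_of_le_v hv_mono hvinv_nonneg hvinv (ht' 0) hc1p.le hIR]

/- ## Construction for the main case `c 1 < c a` (two signals) -/

lemma construct_k2 {n : ℕ} (r c : Fin (n + 1) → ℝ) (v vinv : ℝ → ℝ)
    (hr0 : r 0 = 0) (hc0 : c 0 = 0)
    (hc1_min : ∀ b : Fin (n + 1), b ≠ 0 → c 1 ≤ c b)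
    (hr1_max : ∀ b : Fin (n + 1), b ≠ 0 → c b = c 1 → r b ≤ r 1)
    (hv_mono : StrictMonoOn v (Set.Ici 0))
    (hv_nonneg : ∀ z : ℝ, 0 ≤ z → 0 ≤ v z)
    (hvinv_nonneg : ∀ u : ℝ, 0 ≤ u → 0 ≤ vinv u)
    (hvinv : ∀ u : ℝ, 0 ≤ u → v (vinv u) = u)
    (hconv : ConvexOn ℝ (Set.Ici 0) vinv)
    (a : Fin (n + 1)) (ha : a ≠ 0) (h1ne : (1 : Fin (n + 1)) ≠ 0) (hane1 : a ≠ 1)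
    (hc1p : 0 < c 1) (hlt : c 1 < c a)
    (s q : ℝ) (hq0 : 0 < q) (hq1 : q ≤ 1)
    (hqs : (1 - q) * vinv (c 1) + q * vinv (c 1 + (c a - c 1) / q) = s)
    (hsM : s ≤ r a - max (r 1 - vinv (c 1)) 0) :
    ImplementsPairV v r c a s := by
  have hmono' : ∀ u₁ u₂ : ℝ, 0 ≤ u₁ → 0 ≤ u₂ → u₁ ≤ u₂ → vinv u₁ ≤ vinv u₂ :=
    fun u₁ u₂ h1 h2 h => vinv_mono hv_mono hvinv_nonneg hvinv h1 h2 h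
  set m := vinv (c 1) with hm
  have hm0 : 0 ≤ m := hvinv_nonneg _ hc1p.le
  have hvm : v m = c 1 := hvinv _ hc1p.le
  have hM0 : (0:ℝ) ≤ max (r 1 - m) 0 := le_max_right _ _
  have hM1 : r 1 - m ≤ max (r 1 - m) 0 := le_max_left _ _
  have hras : s ≤ r a := by linarith
  have hras0 : 0 ≤ r a - s := by linarith
  set B := c 1 + (c a - c 1) / q with hB
  have hBc1 : c 1 ≤ B := by
    have : 0 ≤ (c a - c 1) / q := div_nonneg (by linarith) hq0.le
    simp [hB]; linarith
  have hB0 : 0 ≤ B := hc1p.le.trans hBc1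
  have hvB : v (vinv B) = B := hvinv _ hB0
  have hvB0 : 0 ≤ vinv B := hvinv_nonneg _ hB0
  have hkeyB : (1 - q) * c 1 + q * B = c a := by
    rw [hB]; field_simp; ring
  have h1nea : (1 : Fin (n + 1)) ≠ a := fun h => hane1 h.symm
  set I₂ : Fin (n + 1) → Fin 2 → ℝ := fun b => if b = a then ![1 - q, q] else ![1, 0]
    with hI₂
  set t₂ : Fin 2 → ℝ := ![m, vinv B] with ht₂
  -- generic evaluation lemmas for an arbitrary contract
  have hAVa' : ∀ t' : Fin 2 → ℝ,
      uAV v c I₂ t' a = (1 - q) * v (t' 0) + q * v (t' 1) - c a := by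
    intro t'
    simp [uAV, ha, hI₂, Fin.sum_univ_two]
  have hAVb' : ∀ (t' : Fin 2 → ℝ) (b : Fin (n + 1)), b ≠ 0 → b ≠ a →
      uAV v c I₂ t' b = v (t' 0) - c b := by
    intro t' b hb hba
    simp [uAV, hb, hI₂, hba, Fin.sum_univ_two]
  have hAV0' : ∀ t' : Fin 2 → ℝ, uAV v c I₂ t' 0 = 0 := by
    intro t'; simp [uAV, hc0]
  have hExa' : ∀ t' : Fin 2 → ℝ, expT I₂ t' a = (1 - q) * t' 0 + q * t' 1 := by
    intro t'
    simp [expT, ha, hI₂, Fin.sum_univ_two]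
  have hExb' : ∀ (t' : Fin 2 → ℝ) (b : Fin (n + 1)), b ≠ 0 → b ≠ a →
      expT I₂ t' b = t' 0 := by
    intro t' b hb hba
    simp [expT, hb, hI₂, hba, Fin.sum_univ_two]
  have hEx0' : ∀ t' : Fin 2 → ℝ, expT I₂ t' 0 = 0 := by
    intro t'; simp [expT]
  -- values at the designed contract
  have ht₂0 : t₂ 0 = m := rfl
  have ht₂1 : t₂ 1 = vinv B := rfl
  have hExa : expT I₂ t₂ a = s := by
    rw [hExa' t₂, ht₂0, ht₂1, ← hqs, hm, hB]
  have hAVa : uAV v c I₂ t₂ a = 0 := by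
    rw [hAVa' t₂, ht₂0, ht₂1, hvm, hvB]
    linarith
  have hPa : uP r I₂ t₂ a = r a - s := by rw [uP, hExa]
  refine ⟨2, two_pos, I₂, t₂, ?_, ⟨?_, ⟨?_, ?_⟩, ?_⟩, hExa⟩
  · -- stochastic
    intro b hb
    by_cases hba : b = a
    · constructor
      · intro j
        fin_cases j <;> simp [hI₂, hba] <;> linarith
      · simp [hI₂, hba, Fin.sum_univ_two]
    · constructor
      · intro j
        fin_cases j <;> simp [hI₂, hba]
      · simp [hI₂, hba, Fin.sum_univ_two]
  · -- nonneg transfers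
    intro j
    fin_cases j <;> simp [ht₂] <;> [exact hm0; exact hvB0]
  · -- agent's optimality
    intro b
    rw [hAVa]
    by_cases hb : b = 0
    · rw [hb, hAV0' t₂]
    · by_cases hba : b = a
      · rw [hba, hAVa]
      · rw [hAVb' t₂ b hb hba, ht₂0, hvm]
        have := hc1_min b hb; linarith
  · -- tie-breaking
    intro b hb
    rw [hAVa] at hb
    rw [hPa]
    by_cases hb0 : b = 0
    · rw [hb0, uP, hEx0' t₂, hr0]; linarith
    · by_cases hba : b = a
      · rw [hba, hPa]
      · rw [hAVb' t₂ b hb0 hba, ht₂0, hvm] at hb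
        have hcb : c b = c 1 := by linarith
        rw [uP, hExb' t₂ b hb0 hba, ht₂0]
        have := hr1_max b hb0 hcb
        linarith
  · -- optimality of the contract
    intro t' a' ht' heq'
    obtain ⟨hA', _⟩ := heq'
    rw [hPa]
    have hX0 : 0 ≤ v (t' 0) := hv_nonneg _ (ht' 0)
    have hY0 : 0 ≤ v (t' 1) := hv_nonneg _ (ht' 1)
    by_cases ha'0 : a' = 0
    · rw [ha'0, uP, hEx0' t', hr0]; linarith
    · by_cases ha'a : a' = a
      · -- implementing `a` costs at least `s`
        rw [ha'a] at hA' ⊢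
        have hIR : 0 ≤ (1 - q) * v (t' 0) + q * v (t' 1) - c a := by
          have := hA' 0
          rw [hAV0' t', hAVa' t'] at this
          linarith
        have hIC : v (t' 0) - c 1 ≤ (1 - q) * v (t' 0) + q * v (t' 1) - c a := by
          have := hA' 1
          rw [hAVb' t' 1 h1ne h1nea, hAVa' t'] at this
          linarith
        have hcon1 : (1 - q) * c 1 + q * B ≤ (1 - q) * v (t' 0) + q * v (t' 1) := by
          rw [hkeyB]; linarith
        have hcon2 : B - c 1 ≤ v (t' 1) - v (t' 0) := by
          have hq2 : q * (B - c 1) = c a - c 1 := by rw [hB]; field_simp; ring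
          have : q * (B - c 1) ≤ q * (v (t' 1) - v (t' 0)) := by
            rw [hq2]; nlinarith
          exact le_of_mul_le_mul_left this hq0
        have hcb := cost_bound hconv hmono' (by linarith : (0:ℝ) ≤ 1 - q) hq0
          hc1p.le hBc1 hX0 hY0 hcon1 hcon2
        have hv0' : vinv (v (t' 0)) = t' 0 :=
          vinv_v hv_mono hvinv_nonneg hvinv (ht' 0) hX0
        have hv1' : vinv (v (t' 1)) = t' 1 :=
          vinv_v hv_mono hvinv_nonneg hvinv (ht' 1) hY0
        rw [hv0', hv1'] at hcb
        have hsle : s ≤ (1 - q) * t' 0 + q * t' 1 := by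
          rw [← hqs]; exact hcb
        rw [uP, hExa' t']
        linarith
      · -- implementing another action
        have hcle : c a' ≤ c 1 := by
          have := hA' 1
          rw [hAVb' t' 1 h1ne h1nea, hAVb' t' a' ha'0 ha'a] at this
          linarith
        have hceq : c a' = c 1 := le_antisymm hcle (hc1_min a' ha'0)
        have hIR : c 1 ≤ v (t' 0) := by
          have := hA' 0
          rw [hAV0' t', hAVb' t' a' ha'0 ha'a, hceq] at this
          linarith
        have htm : m ≤ t' 0 :=
          vinv_le_of_le_v hv_mono hvinv_nonneg hvinv (ht' 0) hc1p.le hIR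
        rw [uP, hExb' t' a' ha'0 ha'a]
        have := hr1_max a' ha'0 hceq
        linarith

/-- In the principal-agent model with a risk-averse agent under limited
liability, if an action $a \in \{1,\dots,n\}$ is implementable (i.e.
$r_a - v^{-1}(c_a) \ge \max\{r_1 - v^{-1}(c_1), 0\}$), then $(a,s)$ is implementable if
and only if $s \in [v^{-1}(c_a),\, r_a - \max\{r_1 - v^{-1}(c_1), 0\}]$. -/
theorem implementable_pair_iff_risk_averse
    (n : ℕ) (hn : 1 ≤ n) (r c : Fin (n + 1) → ℝ)
    (hr0 : r 0 = 0) (hc0 : c 0 = 0)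
    (hr_nonneg : ∀ a, 0 ≤ r a)
    (hc_pos : ∀ a : Fin (n + 1), a ≠ 0 → 0 < c a)
    (hc1_min : ∀ a : Fin (n + 1), a ≠ 0 → c 1 ≤ c a)
    (hr1_max : ∀ a : Fin (n + 1), a ≠ 0 → c a = c 1 → r a ≤ r 1)
    (v : ℝ → ℝ)
    (hv_conc : ConcaveOn ℝ (Set.Ici 0) v)
    (hv_mono : StrictMonoOn v (Set.Ici 0))
    (hv0 : v 0 = 0)
    (hv_nonneg : ∀ z : ℝ, 0 ≤ z → 0 ≤ v z)
    (hv_lim : Tendsto (fun z : ℝ => v z / z) atTop (nhds 0))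
    (vinv : ℝ → ℝ)
    (hvinv_nonneg : ∀ u : ℝ, 0 ≤ u → 0 ≤ vinv u)
    (hvinv : ∀ u : ℝ, 0 ≤ u → v (vinv u) = u)
    (a : Fin (n + 1)) (ha : a ≠ 0)
    (ha_impl : max (r 1 - vinv (c 1)) 0 ≤ r a - vinv (c a)) (s : ℝ) :
    ImplementsPairV v r c a s ↔
      vinv (c a) ≤ s ∧ s ≤ r a - max (r 1 - vinv (c 1)) 0 := by
  have h1ne : (1 : Fin (n + 1)) ≠ 0 := by
    simp [Fin.ext_iff, Fin.val_one', Nat.mod_eq_of_lt (by omega : 1 < n + 1)]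
  have hc1p : 0 < c 1 := hc_pos 1 h1ne
  have hm0 : 0 ≤ vinv (c 1) := hvinv_nonneg _ hc1p.le
  have hvm : v (vinv (c 1)) = c 1 := hvinv _ hc1p.le
  have hcap : 0 < c a := hc_pos a ha
  have hvca0 : 0 ≤ vinv (c a) := hvinv_nonneg _ hcap.le
  have hvca : v (vinv (c a)) = c a := hvinv _ hcap.le
  have hM0 : (0:ℝ) ≤ max (r 1 - vinv (c 1)) 0 := le_max_right _ _
  have hM1 : r 1 - vinv (c 1) ≤ max (r 1 - vinv (c 1)) 0 := le_max_left _ _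
  constructor
  · rintro ⟨k, hk, I, t, hI, ⟨ht0, ⟨hA, hP⟩, hOpt⟩, hs⟩
    obtain ⟨hIa0, hIa1⟩ := hI a ha
    have hs' : s = ∑ j, I a j * t j := by rw [← hs]; simp [expT, ha]
    have hs0 : 0 ≤ s := by
      rw [hs']; exact Finset.sum_nonneg fun j _ => mul_nonneg (hIa0 j) (ht0 j)
    have hA0 : uAV v c I t 0 = 0 := by simp [uAV, hc0]
    have hAa : uAV v c I t a = (∑ j, I a j * v (t j)) - c a := by simp [uAV, ha]
    have hIR : c a ≤ ∑ j, I a j * v (t j) := by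
      have := hA 0; rw [hA0, hAa] at this; linarith
    have hjen : (∑ j, I a j * v (t j)) ≤ v s := by
      have := hv_conc.le_map_sum (fun j (_ : j ∈ Finset.univ) => hIa0 j) hIa1
        (fun j _ => Set.mem_Ici.2 (ht0 j))
      simp only [smul_eq_mul] at this
      rw [hs']; exact this
    have hlow : vinv (c a) ≤ s :=
      vinv_le_of_le_v hv_mono hvinv_nonneg hvinv hs0 hcap.le (hIR.trans hjen)
    refine ⟨hlow, ?_⟩
    have huPa : uP r I t a = r a - s := by rw [uP, hs]
    have hAb' : ∀ b : Fin (n + 1), b ≠ 0 →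
        uAV v c I (fun _ => vinv (c 1)) b = c 1 - c b := by
      intro b hb
      rw [uAV, if_neg hb]
      have : (∑ j, I b j * v (vinv (c 1))) = c 1 := by
        rw [← Finset.sum_mul, (hI b hb).2, one_mul, hvm]
      rw [this]
    have hA0' : uAV v c I (fun _ => vinv (c 1)) 0 = 0 := by simp [uAV, hc0]
    have hPb' : ∀ b : Fin (n + 1), b ≠ 0 →
        uP r I (fun _ => vinv (c 1)) b = r b - vinv (c 1) := by
      intro b hb
      rw [uP, expT, if_neg hb, ← Finset.sum_mul, (hI b hb).2, one_mul]
    have hP0' : uP r I (fun _ => vinv (c 1)) 0 = 0 := by simp [uP, expT, hr0]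
    rcases le_or_gt 0 (r 1 - vinv (c 1)) with hpos | hneg
    · have heq : IsEquilibriumV v r c I (fun _ => vinv (c 1)) 1 := by
        constructor
        · intro b
          rw [hAb' 1 h1ne]
          by_cases hb : b = 0
          · rw [hb, hA0']; linarith
          · rw [hAb' b hb]; have := hc1_min b hb; linarith
        · intro b hb
          rw [hPb' 1 h1ne]
          by_cases hb0 : b = 0
          · rw [hb0, hP0']; linarith
          · rw [hAb' b hb0, hAb' 1 h1ne] at hb
            have hcb : c b = c 1 := by linarith
            rw [hPb' b hb0]
            have := hr1_max b hb0 hcb; linarith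
      have := hOpt (fun _ => vinv (c 1)) 1 (fun _ => hm0) heq
      rw [hPb' 1 h1ne, huPa] at this
      rw [max_eq_left hpos]; linarith
    · have heq : IsEquilibriumV v r c I (fun _ => vinv (c 1)) 0 := by
        constructor
        · intro b
          rw [hA0']
          by_cases hb : b = 0
          · rw [hb, hA0']
          · rw [hAb' b hb]; have := hc1_min b hb; linarith
        · intro b hb
          rw [hP0']
          by_cases hb0 : b = 0
          · rw [hb0, hP0']
          · rw [hAb' b hb0, hA0'] at hb
            have hcb : c b = c 1 := by linarith
            rw [hPb' b hb0]
            have := hr1_max b hb0 hcb; linarith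
      have := hOpt (fun _ => vinv (c 1)) 0 (fun _ => hm0) heq
      rw [hP0', huPa] at this
      rw [max_eq_right hneg.le]; linarith
  · rintro ⟨hlow, hhigh⟩
    by_cases hcac1 : c a = c 1
    · have hra_le : r a ≤ r 1 := hr1_max a ha hcac1
      have hvinv_eq : vinv (c a) = vinv (c 1) := by rw [hcac1]
      have hr1_le : r 1 ≤ r a := by
        rw [hvinv_eq] at ha_impl; linarith
      have hra : r a = r 1 := le_antisymm hra_le hr1_le
      have hram : 0 ≤ r a - vinv (c 1) := by
        rw [hvinv_eq] at ha_impl; linarith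
      have hse : s = vinv (c 1) := by
        refine le_antisymm ?_ (hvinv_eq ▸ hlow)
        have : r a - max (r 1 - vinv (c 1)) 0 ≤ vinv (c 1) := by
          rw [hra]; linarith
        linarith
      rw [hse]
      exact construct_k1 r c v vinv hr0 hc0 hc1_min hr1_max hv_mono hv_nonneg
        hvinv_nonneg hvinv a ha h1ne hc1p hcac1 hra hram
    · have hlt : c 1 < c a := lt_of_le_of_ne (hc1_min a ha) (Ne.symm hcac1)
      have hane1 : a ≠ 1 := fun h => hcac1 (by rw [h])
      have hvca_pos : 0 < vinv (c a) := by
        rcases lt_or_eq_of_le hvca0 with h | h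
        · exact h
        · exfalso; rw [← h, hv0] at hvca; linarith
      have hspos : 0 < s := lt_of_lt_of_le hvca_pos hlow
      have hconv : ConvexOn ℝ (Set.Ici 0) vinv :=
        vinv_convexOn hv_conc hv_mono hvinv_nonneg hvinv
      have hmono' : ∀ u₁ u₂ : ℝ, 0 ≤ u₁ → 0 ≤ u₂ → u₁ ≤ u₂ → vinv u₁ ≤ vinv u₂ :=
        fun u₁ u₂ h1 h2 h => vinv_mono hv_mono hvinv_nonneg hvinv h1 h2 h
      obtain ⟨q, hq0, hq1, hqs⟩ := exists_q hv_mono hv_lim hvinv_nonneg hvinv hconv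
        hmono' hc1p hlt hlow hspos
      exact construct_k2 r c v vinv hr0 hc0 hc1_min hr1_max hv_mono hv_nonneg
        hvinv_nonneg hvinv hconv a ha h1ne hane1 hc1p hlt s q hq0 hq1 hqs hhigh
end

section
/- Let c_1, c_a, y, q be reals with 0 < c_1 < c_a, y ≥ 0 and 0 < q ≤ 1, and set p = q·(y + c_1)/(y + c_a), so p < q. If reals v_1, v_2 satisfy v_1 − v_2 ≥ (c_a − c_1)/(q − p), then q·v_1 + (1−q)·v_2 − c_a ≥ v_2 + y. In particular, if additionally v_2 ≥ 0, then q·v_1 + (1−q)·v_2 − c_a ≥ 0. -/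
/-! With `p = q (y + c₁)/(y + cₐ)` the likelihood gap is `q - p = q (cₐ - c₁)/(y + cₐ)`, so the
incentive constraint reads `(y + cₐ)/q ≤ v₁ - v₂`, i.e. `y + cₐ ≤ q (v₁ - v₂)`. Since the agent's
utility at the costly action is `v₂ + q (v₁ - v₂) - cₐ`, it is at least `v₂ + y`. -/

section LikelihoodGap

variable {K : Type*} [Field K]

theorem sub_mul_add_div_add_eq (q y c₁ cₐ : K) (h : y + cₐ ≠ 0) :
    q - q * (y + c₁) / (y + cₐ) = q * (cₐ - c₁) / (y + cₐ) := by
  field_simp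
  ring

theorem div_sub_mul_add_div_add_eq (q y c₁ cₐ : K) (hq : q ≠ 0) (hc : cₐ - c₁ ≠ 0)
    (h : y + cₐ ≠ 0) :
    (cₐ - c₁) / (q - q * (y + c₁) / (y + cₐ)) = (y + cₐ) / q := by
  rw [sub_mul_add_div_add_eq q y c₁ cₐ h]
  field_simp

end LikelihoodGap

section Ordered

variable {K : Type*} [Field K] [LinearOrder K] [IsStrictOrderedRing K]

theorem mul_add_div_add_lt_self {q y c₁ cₐ : K} (hq : 0 < q) (hc : c₁ < cₐ) (h : 0 < y + cₐ) :
    q * (y + c₁) / (y + cₐ) < q := by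
  have hgap : 0 < q * (cₐ - c₁) / (y + cₐ) := div_pos (mul_pos hq (sub_pos.2 hc)) h
  linarith [sub_mul_add_div_add_eq q y c₁ cₐ h.ne']

theorem add_le_expected_utility_of_div_le {q y cₐ v₁ v₂ : K} (hq : 0 < q)
    (h : (y + cₐ) / q ≤ v₁ - v₂) :
    v₂ + y ≤ q * v₁ + (1 - q) * v₂ - cₐ := by
  have : y + cₐ ≤ q * (v₁ - v₂) := by rwa [div_le_iff₀' hq] at h
  linarith

end Ordered

theorem incentive_constraint_implies_ir_general (c1 ca y q : ℝ)
    (hc1 : 0 < c1) (hc1a : c1 < ca) (hy : 0 ≤ y) (hq0 : 0 < q)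
    (p : ℝ) (hp : p = q * (y + c1) / (y + ca))
    (v1 v2 : ℝ) (hIC : (ca - c1) / (q - p) ≤ v1 - v2) :
    p < q ∧ v2 + y ≤ q * v1 + (1 - q) * v2 - ca ∧
      (0 ≤ v2 → 0 ≤ q * v1 + (1 - q) * v2 - ca) := by
  subst hp
  have hD : 0 < y + ca := by linarith
  rw [div_sub_mul_add_div_add_eq q y c1 ca hq0.ne' (sub_ne_zero.2 hc1a.ne') hD.ne'] at hIC
  have hIR := add_le_expected_utility_of_div_le hq0 hIC
  exact ⟨mul_add_div_add_lt_self hq0 hc1a hD, hIR, fun hv2 => by linarith⟩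

/-- Let `0 < c1 < ca`, `y ≥ 0`, `0 < q ≤ 1`, and
`p = q (y + c1)/(y + ca)`, so `p < q`. If `v1 - v2 ≥ (ca - c1)/(q - p)` (the incentive
constraint in favor of the costlier action), then
`q v1 + (1 - q) v2 - ca ≥ v2 + y`; in particular, if moreover `v2 ≥ 0`, then
`q v1 + (1 - q) v2 - ca ≥ 0`. -/
theorem incentive_constraint_implies_ir (c1 ca y q : ℝ)
    (hc1 : 0 < c1) (hc1a : c1 < ca) (hy : 0 ≤ y) (hq0 : 0 < q) (hq1 : q ≤ 1)
    (p : ℝ) (hp : p = q * (y + c1) / (y + ca))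
    (v1 v2 : ℝ) (hIC : (ca - c1) / (q - p) ≤ v1 - v2) :
    p < q ∧ v2 + y ≤ q * v1 + (1 - q) * v2 - ca ∧
      (0 ≤ v2 → 0 ≤ q * v1 + (1 - q) * v2 - ca) :=
  incentive_constraint_implies_ir_general c1 ca y q hc1 hc1a hy hq0 p hp v1 v2 hIC
end
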